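/- arXiv:2101.08544 — 7 statements merged into one kernel-verified Lean document; each statement's English description precedes it below -/
import Mathlib

section
/- Let χ: ℝ⁺ → ℝ be a kernel (satisfying ∑_{k∈ℤ} χ(e^{-k}u) = 1 for all u > 0 and finite absolute moment of some order ν > 0). Let f: ℝ⁺ → ℝ be bounded, t ∈ ℝ⁺ a point where the one-sided limits f(t+0) and f(t-0) exist, and define h_t(x) = f(x) - f(t-0) for x < t, h_t(x) = f(x) - f(t+0) for x > t, h_t(t) = 0. If w·log(t) ∈ ℤ, then (S_w^χ f)(t) = (S_w^χ h_t)(t) + f(t-0) + ψ_χ⁻(t^w)·[f(t+0) - f(t-0)] + χ(1)·[f(t) - f(t-0)], where ψ_χ⁻(u) := ∑_{k > log u} χ(u e^{-k}). -/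
open Real Filter Set MeasureTheory

noncomputable def expSamp (χ f : ℝ → ℝ) (w t : ℝ) : ℝ :=
  ∑' k : ℤ, χ (Real.exp (-(k : ℝ)) * t ^ w) * f (Real.exp ((k : ℝ) / w))

noncomputable def psiMinus (χ : ℝ → ℝ) (u : ℝ) : ℝ :=
  ∑' k : ℤ, if Real.log u < (k : ℝ) then χ (u * Real.exp (-(k : ℝ))) else 0

noncomputable def psiPlus (χ : ℝ → ℝ) (u : ℝ) : ℝ :=
  ∑' k : ℤ, if (k : ℝ) < Real.log u then χ (u * Real.exp (-(k : ℝ))) else 0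

/-- χ is a kernel: absolute summability, partition of unity, and a finite absolute
moment of some order ν > 0. -/
def IsKernel (χ : ℝ → ℝ) : Prop :=
  (∀ u : ℝ, 0 < u → Summable fun k : ℤ => |χ (Real.exp (-(k : ℝ)) * u)|) ∧
  (∀ u : ℝ, 0 < u → HasSum (fun k : ℤ => χ (Real.exp (-(k : ℝ)) * u)) 1) ∧
  ∃ ν : ℝ, 0 < ν ∧ ∃ C : ℝ, ∀ u : ℝ, 0 < u →
    (Summable fun k : ℤ => |χ (Real.exp (-(k : ℝ)) * u)| * |(k : ℝ) - Real.log u| ^ ν) ∧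
    ∑' k : ℤ, |χ (Real.exp (-(k : ℝ)) * u)| * |(k : ℝ) - Real.log u| ^ ν ≤ C

/-- Logarithmic modulus of continuity. -/
noncomputable def logMod (f : ℝ → ℝ) (δ : ℝ) : ℝ :=
  sSup {d : ℝ | ∃ p q : ℝ, 0 < p ∧ 0 < q ∧ |Real.log p - Real.log q| ≤ δ ∧ d = |f p - f q|}

/-- Sup norm of a function on the positive reals. -/
noncomputable def supNormPos (f : ℝ → ℝ) : ℝ := ⨆ x : {x : ℝ // 0 < x}, |f x.1|

/-- Absolute moment of order ν of the kernel χ. -/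
noncomputable def absMoment (χ : ℝ → ℝ) (ν : ℝ) : ℝ :=
  ⨆ u : {u : ℝ // 0 < u},
    ∑' k : ℤ, |χ (Real.exp (-(k : ℝ)) * u.1)| * |(k : ℝ) - Real.log u.1| ^ ν

/-- log-uniform continuity on ℝ⁺. -/
def LogUniformCont (f : ℝ → ℝ) : Prop :=
  ∀ ε : ℝ, 0 < ε → ∃ δ : ℝ, 0 < δ ∧ ∀ p q : ℝ, 0 < p → 0 < q →
    |Real.log p - Real.log q| < δ → |f p - f q| < ε

/-- The second order Mellin B-spline. -/
noncomputable def mellinB2 (t : ℝ) : ℝ :=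
  if 1 ≤ t ∧ t ≤ Real.exp 1 then 1 - Real.log t
  else if Real.exp (-1) ≤ t ∧ t < 1 then 1 + Real.log t
  else 0

/-! At a node `t = e^{m/w}` the samples of `f` split into those of `h_t` plus the step function
taking the values `f(t-0)`, `f(t)`, `f(t+0)` left of, at, and right of the node `k = m`. Since the
kernel weights `χ(e^{-k} e^m)` sum to `1`, the step part contributes
`f(t-0) + ψ⁻(e^m) (f(t+0) - f(t-0)) + χ(1) (f(t) - f(t-0))`. -/

theorem ite_jump_eq_sub (f : ℝ → ℝ) (t a b x : ℝ) :
    (if x < t then f x - a else if t < x then f x - b else 0) =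
      f x - (if x < t then a else if t < x then b else f t) := by
  split_ifs with hlt hgt
  · rfl
  · rfl
  · rw [le_antisymm (not_lt.1 hgt) (not_lt.1 hlt), sub_self]

section Nodes

variable {t w : ℝ} {m : ℤ} (ht : 0 < t) (hw : 0 < w) (hm : w * log t = m)
include ht hw hm

theorem exp_intCast_div_lt_iff (k : ℤ) : exp (k / w) < t ↔ k < m := by
  rw [← exp_log ht, exp_lt_exp, div_lt_iff₀ hw, mul_comm, hm, Int.cast_lt]

theorem lt_exp_intCast_div_iff (k : ℤ) : t < exp (k / w) ↔ m < k := by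
  rw [← exp_log ht, exp_lt_exp, lt_div_iff₀ hw, mul_comm, hm, Int.cast_lt]

end Nodes

theorem rpow_eq_exp_of_mul_log_eq {t w : ℝ} {m : ℤ} (ht : 0 < t) (hm : w * log t = m) :
    t ^ w = exp m := by
  rw [rpow_def_of_pos ht, mul_comm, hm]

theorem hasSum_psiMinus {χ : ℝ → ℝ} {u : ℝ}
    (habs : Summable fun k : ℤ => |χ (exp (-(k : ℝ)) * u)|) :
    HasSum (fun k : ℤ => if log u < k then χ (exp (-(k : ℝ)) * u) else 0) (psiMinus χ u) := by
  have hs : Summable fun k : ℤ => if log u < k then χ (exp (-(k : ℝ)) * u) else 0 :=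
    habs.of_norm_bounded fun k => by split_ifs <;> simp
  simpa only [psiMinus, mul_comm u] using hs.hasSum

namespace IsKernel

variable {χ : ℝ → ℝ} (hχ : IsKernel χ)
include hχ

theorem summable_mul_of_abs_le {u : ℝ} (hu : 0 < u) {F : ℤ → ℝ} {C : ℝ}
    (hF : ∀ k, |F k| ≤ C) : Summable fun k : ℤ => χ (exp (-(k : ℝ)) * u) * F k :=
  Summable.of_norm_bounded ((hχ.1 u hu).mul_right C) fun k => by
    rw [Real.norm_eq_abs, abs_mul]
    exact mul_le_mul_of_nonneg_left (hF k) (abs_nonneg _)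

/-- The step function is `a + (b - a) 𝟙_{k > m} + (c - a) 𝟙_{k = m}`. -/
theorem hasSum_mul_step (m : ℤ) (a b c : ℝ) :
    HasSum (fun k : ℤ => χ (exp (-(k : ℝ)) * exp m) * (if k < m then a else if m < k then b else c))
      (a + psiMinus χ (exp m) * (b - a) + χ 1 * (c - a)) := by
  have hu : 0 < exp (m : ℝ) := exp_pos _
  have hone : HasSum (fun k : ℤ => a * χ (exp (-(k : ℝ)) * exp m)) a := by
    simpa using (hχ.2.1 _ hu).mul_left a
  have hright := (hasSum_psiMinus (hχ.1 _ hu)).mul_left (b - a)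
  have hnode : HasSum (fun k : ℤ => if k = m then (c - a) * χ 1 else 0) ((c - a) * χ 1) :=
    hasSum_ite_eq m _
  convert (hone.add hright).add hnode using 1
  · ext k
    simp only [log_exp, Int.cast_lt]
    rcases lt_trichotomy k m with hk | rfl | hk
    · simp [hk, hk.ne, hk.not_gt, mul_comm]
    · simp only [← exp_add, neg_add_cancel, exp_zero, lt_self_iff_false, ↓reduceIte, mul_zero,
        add_zero]
      ring
    · simp only [hk.not_gt, ↓reduceIte, hk, hk.ne', add_zero]
      ring
  · ring

end IsKernel

theorem stmt0_general (χ f : ℝ → ℝ) (hχ : IsKernel χ)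
    (B : ℝ) (hf : ∀ x : ℝ, 0 < x → |f x| ≤ B)
    (t : ℝ) (ht : 0 < t) (fp fm : ℝ)
    (w : ℝ) (hw : 0 < w) (hwt : ∃ m : ℤ, w * Real.log t = (m : ℝ)) :
    expSamp χ f w t =
      expSamp χ (fun x => if x < t then f x - fm else if t < x then f x - fp else 0) w t
        + fm + psiMinus χ (t ^ w) * (fp - fm) + χ 1 * (f t - fm) := by
  obtain ⟨m, hm⟩ := hwt
  have hstep : HasSum (fun k : ℤ => χ (exp (-(k : ℝ)) * t ^ w) *
      (if exp (k / w) < t then fm else if t < exp (k / w) then fp else f t))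
      (fm + psiMinus χ (t ^ w) * (fp - fm) + χ 1 * (f t - fm)) := by
    simpa only [rpow_eq_exp_of_mul_log_eq ht hm, exp_intCast_div_lt_iff ht hw hm,
      lt_exp_intCast_div_iff ht hw hm] using hχ.hasSum_mul_step m fm fp (f t)
  have hsf : Summable fun k : ℤ => χ (exp (-(k : ℝ)) * t ^ w) * f (exp (k / w)) :=
    hχ.summable_mul_of_abs_le (rpow_pos_of_pos ht w) fun k => hf _ (exp_pos _)
  have hsplit : expSamp χ (fun x => if x < t then f x - fm else if t < x then f x - fp else 0) w t
      = expSamp χ f w t - (fm + psiMinus χ (t ^ w) * (fp - fm) + χ 1 * (f t - fm)) := by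
    rw [← hstep.tsum_eq, expSamp, expSamp, ← hsf.tsum_sub hstep.summable]
    simp only [ite_jump_eq_sub, mul_sub]
  rw [hsplit]
  ring

/-- Representation lemma, case w·log t ∈ ℤ. -/
theorem stmt0 (χ f : ℝ → ℝ) (hχ : IsKernel χ)
    (B : ℝ) (hf : ∀ x : ℝ, 0 < x → |f x| ≤ B)
    (t : ℝ) (ht : 0 < t) (fp fm : ℝ)
    (hfp : Filter.Tendsto f (nhdsWithin t (Set.Ioi t)) (nhds fp))
    (hfm : Filter.Tendsto f (nhdsWithin t (Set.Iio t)) (nhds fm))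
    (w : ℝ) (hw : 0 < w) (hwt : ∃ m : ℤ, w * Real.log t = (m : ℝ)) :
    expSamp χ f w t =
      expSamp χ (fun x => if x < t then f x - fm else if t < x then f x - fp else 0) w t
        + fm + psiMinus χ (t ^ w) * (fp - fm) + χ 1 * (f t - fm) :=
  stmt0_general χ f hχ B hf t ht fp fm w hw hwt
end

section
/- Let χ be a kernel and f: ℝ⁺ → ℝ a bounded function with a non-removable jump discontinuity at t ∈ ℝ⁺ (i.e. f(t+0) and f(t-0) exist and f(t+0) ≠ f(t-0)). For α ∈ ℝ, the following are equivalent: (i) lim_{w→∞, w·log t ∈ ℤ} (S_w^χ f)(t) = α f(t+0) + (1 - α - χ(1)) f(t-0) + χ(1) f(t); (ii) ψ_χ⁻(1) = α; (iii) ψ_χ⁺(1) = 1 - α - χ(1). -/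
open Real Filter Set MeasureTheory

/-!
If `w log t = m ∈ ℤ` then `t ^ w = e ^ m`, and shifting the summation index by `m` turns the
sampling series into `∑ₖ χ(e^{-k}) f(t e^{k/w})`. As `w → ∞` the node `t e^{k/w}` tends to `t`
from the right for `k > 0` and from the left for `k < 0`, so dominated convergence gives the limit
`ψ⁻(1) f(t+0) + ψ⁺(1) f(t-0) + χ(1) f(t)`. The partition of unity at `u = 1` reads
`ψ⁻(1) + ψ⁺(1) + χ(1) = 1`, and since `f(t+0) ≠ f(t-0)` the limit determines `ψ⁻(1)`.
-/

open Topology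

theorem tsum_int_eq_tsum_pos_add_tsum_neg_add_zero {E : Type*} [NormedAddCommGroup E]
    [CompleteSpace E] {g : ℤ → E} (hg : Summable g) :
    ∑' k, g k = (∑' k, if 0 < k then g k else 0) + (∑' k, if k < 0 then g k else 0) + g 0 := by
  have hpos : Summable fun k => if 0 < k then g k else 0 :=
    (hg.indicator {k | 0 < k}).congr fun k => by simp [Set.indicator_apply]
  have hneg : Summable fun k => if k < 0 then g k else 0 :=
    (hg.indicator {k | k < 0}).congr fun k => by simp [Set.indicator_apply]
  have hzero : Summable fun k => if k = 0 then g k else 0 :=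
    summable_of_ne_finset_zero (s := {0}) fun k hk => by simp_all
  rw [← tsum_ite_eq 0 g, ← hpos.tsum_add hneg, ← (hpos.add hneg).tsum_add hzero]
  refine tsum_congr fun k => ?_
  rcases lt_trichotomy k 0 with hk | rfl | hk
  · simp [hk, hk.ne, hk.not_gt]
  · simp
  · simp [hk, hk.ne', hk.not_gt]

theorem psiMinus_one (χ : ℝ → ℝ) :
    psiMinus χ 1 = ∑' k : ℤ, if 0 < k then χ (exp (-k)) else 0 := by
  simp [psiMinus]

theorem psiPlus_one (χ : ℝ → ℝ) :
    psiPlus χ 1 = ∑' k : ℤ, if k < 0 then χ (exp (-k)) else 0 := by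
  simp [psiPlus]

theorem psiMinus_one_add_psiPlus_one_add_apply_one {χ : ℝ → ℝ}
    (hχ : HasSum (fun k : ℤ => χ (exp (-k))) 1) :
    psiMinus χ 1 + psiPlus χ 1 + χ 1 = 1 := by
  have hsplit := tsum_int_eq_tsum_pos_add_tsum_neg_add_zero hχ.summable
  rw [hχ.tsum_eq] at hsplit
  simpa [psiMinus_one, psiPlus_one] using hsplit.symm

theorem tendsto_mul_exp_div_atTop (t s : ℝ) :
    Tendsto (fun w => t * exp (s / w)) atTop (𝓝 t) := by
  simpa using ((continuous_exp.tendsto 0).comp (tendsto_const_nhds.div_atTop tendsto_id)).const_mul t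

theorem tendsto_mul_exp_div_atTop_nhdsGT {t s : ℝ} (ht : 0 < t) (hs : 0 < s) :
    Tendsto (fun w => t * exp (s / w)) atTop (𝓝[>] t) := by
  refine tendsto_nhdsWithin_iff.2 ⟨tendsto_mul_exp_div_atTop t s, ?_⟩
  filter_upwards [eventually_gt_atTop 0] with w hw
  exact lt_mul_of_one_lt_right ht (one_lt_exp_iff.2 (div_pos hs hw))

theorem tendsto_mul_exp_div_atTop_nhdsLT {t s : ℝ} (ht : 0 < t) (hs : s < 0) :
    Tendsto (fun w => t * exp (s / w)) atTop (𝓝[<] t) := by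
  refine tendsto_nhdsWithin_iff.2 ⟨tendsto_mul_exp_div_atTop t s, ?_⟩
  filter_upwards [eventually_gt_atTop 0] with w hw
  exact mul_lt_of_lt_one_right ht (exp_lt_one_iff.2 (div_neg_of_neg_of_pos hs hw))

theorem tendsto_comp_mul_exp_div_atTop {f : ℝ → ℝ} {t fp fm : ℝ} (ht : 0 < t)
    (hfp : Tendsto f (𝓝[>] t) (𝓝 fp)) (hfm : Tendsto f (𝓝[<] t) (𝓝 fm)) (j : ℤ) :
    Tendsto (fun w => f (t * exp (j / w))) atTop
      (𝓝 (if 0 < j then fp else if j < 0 then fm else f t)) := by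
  rcases lt_trichotomy j 0 with hj | rfl | hj
  · simpa [hj, hj.not_gt, Function.comp_def] using
      hfm.comp (tendsto_mul_exp_div_atTop_nhdsLT ht (Int.cast_lt_zero.2 hj))
  · simp
  · simpa [hj, Function.comp_def] using
      hfp.comp (tendsto_mul_exp_div_atTop_nhdsGT ht (Int.cast_pos.2 hj))

theorem tendsto_tsum_mul_comp_mul_exp_div_atTop {a : ℤ → ℝ} (ha : Summable fun k => |a k|)
    {f : ℝ → ℝ} {B : ℝ} (hf : ∀ x, 0 < x → |f x| ≤ B) {t fp fm : ℝ} (ht : 0 < t)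
    (hfp : Tendsto f (𝓝[>] t) (𝓝 fp)) (hfm : Tendsto f (𝓝[<] t) (𝓝 fm)) :
    Tendsto (fun w => ∑' j : ℤ, a j * f (t * exp (j / w))) atTop
      (𝓝 ((∑' j : ℤ, if 0 < j then a j else 0) * fp
        + (∑' j : ℤ, if j < 0 then a j else 0) * fm + a 0 * f t)) := by
  set c : ℤ → ℝ := fun j => if 0 < j then fp else if j < 0 then fm else f t
  have hc : ∀ j, |c j| ≤ |fp| + |fm| + |f t| := fun j => by
    simp only [c]; split_ifs <;> linarith [abs_nonneg fp, abs_nonneg fm, abs_nonneg (f t)]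
  have hac : Summable fun j => a j * c j :=
    (ha.mul_right (|fp| + |fm| + |f t|)).of_norm_bounded fun j => by
      rw [Real.norm_eq_abs, abs_mul]; exact mul_le_mul_of_nonneg_left (hc j) (abs_nonneg _)
  have hlim := tendsto_tsum_of_dominated_convergence (ha.mul_right B)
    (fun j => (tendsto_comp_mul_exp_div_atTop ht hfp hfm j).const_mul (a j))
    (Eventually.of_forall fun w j => by
      rw [Real.norm_eq_abs, abs_mul]
      exact mul_le_mul_of_nonneg_left (hf _ (mul_pos ht (exp_pos _))) (abs_nonneg _))
  convert hlim using 2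
  rw [tsum_int_eq_tsum_pos_add_tsum_neg_add_zero hac, ← tsum_mul_right, ← tsum_mul_right]
  congr 2 <;> refine tsum_congr fun j => ?_ <;> split_ifs with hj <;> simp [c, hj, lt_asymm]

theorem expSamp_eq_tsum_of_mul_log_eq_intCast (χ f : ℝ → ℝ) {w t : ℝ} (ht : 0 < t) (hw : w ≠ 0)
    {m : ℤ} (hm : w * log t = m) :
    expSamp χ f w t = ∑' j : ℤ, χ (exp (-j)) * f (t * exp (j / w)) := by
  have htw : t ^ w = exp m := by rw [rpow_def_of_pos ht, mul_comm, hm]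
  have hmw : (m : ℝ) / w = log t := by rw [← hm, mul_div_cancel_left₀ _ hw]
  rw [expSamp, ← (Equiv.addRight m).tsum_eq]
  refine tsum_congr fun j => ?_
  simp only [Equiv.coe_addRight, Int.cast_add, htw, add_div, hmw]
  rw [← exp_add, neg_add, neg_add_cancel_right, exp_add, exp_log ht, mul_comm t]

theorem tendsto_expSamp_of_jump {χ f : ℝ → ℝ} (hχ : Summable fun k : ℤ => |χ (exp (-k))|)
    {B : ℝ} (hf : ∀ x, 0 < x → |f x| ≤ B) {t fp fm : ℝ} (ht : 0 < t)
    (hfp : Tendsto f (𝓝[>] t) (𝓝 fp)) (hfm : Tendsto f (𝓝[<] t) (𝓝 fm)) :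
    Tendsto (fun w => expSamp χ f w t) (atTop ⊓ 𝓟 {w : ℝ | ∃ m : ℤ, w * log t = m})
      (𝓝 (psiMinus χ 1 * fp + psiPlus χ 1 * fm + χ 1 * f t)) := by
  have hlim := tendsto_tsum_mul_comp_mul_exp_div_atTop hχ hf ht hfp hfm
  rw [Int.cast_zero, neg_zero, exp_zero] at hlim
  rw [psiMinus_one, psiPlus_one]
  refine (hlim.mono_left inf_le_left).congr' ?_
  filter_upwards [(eventually_gt_atTop 0).filter_mono inf_le_left,
    mem_inf_of_right (mem_principal_self _)] with w hw ⟨m, hm⟩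
  exact (expSamp_eq_tsum_of_mul_log_eq_intCast χ f ht hw.ne' hm).symm

/-- Behaviour at a jump discontinuity along w with w·log t ∈ ℤ. -/
theorem stmt3 (χ f : ℝ → ℝ) (hχ : IsKernel χ)
    (B : ℝ) (hf : ∀ x : ℝ, 0 < x → |f x| ≤ B)
    (t : ℝ) (ht : 0 < t) (fp fm : ℝ)
    (hfp : Filter.Tendsto f (nhdsWithin t (Set.Ioi t)) (nhds fp))
    (hfm : Filter.Tendsto f (nhdsWithin t (Set.Iio t)) (nhds fm))
    (hjump : fp ≠ fm) (α : ℝ)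
    (hNe : (Filter.atTop ⊓ Filter.principal {w : ℝ | ∃ m : ℤ, w * Real.log t = (m : ℝ)}).NeBot) :
    (Filter.Tendsto (fun w => expSamp χ f w t)
        (Filter.atTop ⊓ Filter.principal {w : ℝ | ∃ m : ℤ, w * Real.log t = (m : ℝ)})
        (nhds (α * fp + (1 - α - χ 1) * fm + χ 1 * f t))
      ↔ psiMinus χ 1 = α) ∧
    (psiMinus χ 1 = α ↔ psiPlus χ 1 = 1 - α - χ 1) := by
  obtain ⟨hsumm, hpart, -⟩ := hχ
  have hunit := psiMinus_one_add_psiPlus_one_add_apply_one (by simpa using hpart 1 one_pos)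
  have hlim := tendsto_expSamp_of_jump (by simpa using hsumm 1 one_pos) hf ht hfp hfm
  refine ⟨⟨fun h => ?_, fun h => ?_⟩, ⟨fun h => by linarith, fun h => by linarith⟩⟩
  · have hprod : (α - psiMinus χ 1) * (fp - fm) = 0 := by
      linear_combination tendsto_nhds_unique h hlim + fm * hunit
    exact (sub_eq_zero.1 ((mul_eq_zero.1 hprod).resolve_right (sub_ne_zero.2 hjump))).symm
  · convert hlim using 2
    linear_combination (fm - fp) * h - fm * hunit
end

section
/- Let χ be a kernel and f: ℝ⁺ → ℝ a bounded function with a non-removable jump discontinuity at t ∈ ℝ⁺. For α ∈ ℝ, the following are equivalent: (i) lim_{w→∞, w·log t ∉ ℤ} (S_w^χ f)(t) = α f(t+0) + (1-α) f(t-0); (ii) ψ_χ⁻(u) = α for all u ∈ (1, e); (iii) ψ_χ⁺(u) = 1 - α for all u ∈ (1, e). -/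
open Real Filter Set MeasureTheory

/-!
Put `x = w * log t`, so that `(S_w f)(t) = ∑ₖ χ(e^{x-k}) f(t e^{(k-x)/w})`. For `x ∉ ℤ` the terms
with `k > x` sample `f` to the right of `t` and those with `k < x` to the left, so the series is
close to `fm + (fp - fm) ψ⁻(e^{fract x})`: the terms with `|k - x| < N` by the one-sided limits
(once `N / w` is small), the others by the moment of order `ν` of `χ`, using that
`∑ₖ |χ(e^{x-k})|` is bounded uniformly in `x`. If `ψ⁻ ≡ α` on `(1, e)` this value is constant.
Conversely, along `w → ∞` with `fract (w log t) = log u` it equals `fm + (fp - fm) ψ⁻(u)`, which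
must then be the limit, and `fp ≠ fm` forces `ψ⁻(u) = α`. Finally `ψ⁻ + ψ⁺ = 1` on `(1, e)` by
the partition of unity, since `log u` is not an integer there.
-/
open Topology

namespace IsKernel

variable {χ : ℝ → ℝ}

theorem summable_abs (hχ : IsKernel χ) (x : ℝ) :
    Summable fun k : ℤ => |χ (exp (x - k))| := by
  simpa only [← exp_add, neg_add_eq_sub] using hχ.1 (exp x) (exp_pos x)

theorem hasSum (hχ : IsKernel χ) (x : ℝ) : HasSum (fun k : ℤ => χ (exp (x - k))) 1 := by
  simpa only [← exp_add, neg_add_eq_sub] using hχ.2.1 (exp x) (exp_pos x)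

theorem exists_moment (hχ : IsKernel χ) :
    ∃ ν : ℝ, 0 < ν ∧ ∃ C : ℝ, ∀ x : ℝ,
      (Summable fun k : ℤ => |χ (exp (x - k))| * |(k : ℝ) - x| ^ ν) ∧
      ∑' k : ℤ, |χ (exp (x - k))| * |(k : ℝ) - x| ^ ν ≤ C := by
  obtain ⟨ν, hν, C, hC⟩ := hχ.2.2
  refine ⟨ν, hν, C, fun x => ?_⟩
  simpa only [← exp_add, neg_add_eq_sub, log_exp] using hC (exp x) (exp_pos x)

/-- The kernel is absolutely summable uniformly in the phase (`M₀(χ) < ∞`): away from the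
integer nearest to `x` the moment bound dominates, and the term at that integer is recovered
from the partition of unity. -/
theorem exists_tsum_abs_le (hχ : IsKernel χ) :
    ∃ K : ℝ, ∀ x : ℝ, ∑' k : ℤ, |χ (exp (x - k))| ≤ K := by
  obtain ⟨ν, hν, C, hC⟩ := hχ.exists_moment
  refine ⟨1 + 2 * (2 ^ ν * C), fun x => ?_⟩
  set k₀ := round x
  have hfar : ∀ k : ℤ, k ≠ k₀ → 1 ≤ 2 ^ ν * |(k : ℝ) - x| ^ ν := by
    intro k hk
    have hk' : (1 : ℝ) ≤ |(k : ℝ) - k₀| := by exact_mod_cast Int.one_le_abs (sub_ne_zero.mpr hk)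
    have : (1 : ℝ) ≤ 2 * |(k : ℝ) - x| := by
      have := abs_sub_round x
      linarith [abs_sub_le (k : ℝ) x k₀, abs_sub_comm x (k₀ : ℝ)]
    rw [← mul_rpow zero_le_two (abs_nonneg _)]
    exact one_le_rpow this hν.le
  have hle : ∀ k : ℤ, (if k = k₀ then 0 else |χ (exp (x - k))|) ≤
      2 ^ ν * (|χ (exp (x - k))| * |(k : ℝ) - x| ^ ν) := by
    intro k
    split_ifs with hk
    · positivity
    · nlinarith [hfar k hk, abs_nonneg (χ (exp (x - k)))]
  have hsum_ite : Summable fun k : ℤ => if k = k₀ then 0 else |χ (exp (x - k))| :=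
    ((hC x).1.mul_left _).of_nonneg_of_le (fun k => by split_ifs <;> simp) hle
  have htail : ∑' k : ℤ, (if k = k₀ then 0 else |χ (exp (x - k))|) ≤ 2 ^ ν * C := by
    calc _ ≤ ∑' k : ℤ, 2 ^ ν * (|χ (exp (x - k))| * |(k : ℝ) - x| ^ ν) :=
          hsum_ite.tsum_le_tsum hle ((hC x).1.mul_left _)
      _ ≤ 2 ^ ν * C := by rw [tsum_mul_left]; gcongr; exact (hC x).2
  have hcentre : |χ (exp (x - k₀))| ≤ 1 + 2 ^ ν * C := by
    have hsplit := (hχ.hasSum x).summable.tsum_eq_add_tsum_ite k₀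
    rw [(hχ.hasSum x).tsum_eq] at hsplit
    have habs : (fun k : ℤ => |if k = k₀ then 0 else χ (exp (x - k))|) =
        fun k : ℤ => if k = k₀ then 0 else |χ (exp (x - k))| := by
      funext k; split_ifs <;> simp
    have hrest : |∑' k : ℤ, if k = k₀ then 0 else χ (exp (x - k))| ≤ 2 ^ ν * C := by
      refine le_trans ?_ htail
      rw [← habs]
      exact norm_tsum_le_tsum_norm (f := fun k : ℤ => if k = k₀ then 0 else χ (exp (x - k)))
        (by simpa only [Real.norm_eq_abs, habs] using hsum_ite)
    have := abs_le.mp hrest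
    rw [abs_le]
    constructor <;> linarith
  rw [(hχ.summable_abs x).tsum_eq_add_tsum_ite k₀]
  linarith

theorem hasSum_psiMinus_exp_fract (hχ : IsKernel χ) (x : ℝ) :
    HasSum (fun k : ℤ => if x < k then χ (exp (x - k)) else 0)
      (psiMinus χ (exp (Int.fract x))) := by
  have hs : Summable fun k : ℤ => if x < k then χ (exp (x - k)) else 0 :=
    .of_norm_bounded (hχ.summable_abs x) fun k => by split_ifs <;> simp
  rw [hs.hasSum_iff, psiMinus, ← (Equiv.addLeft ⌊x⌋).tsum_eq]
  refine tsum_congr fun j => ?_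
  simp only [Equiv.coe_addLeft, log_exp, Int.fract, ← exp_add, Int.cast_add]
  congr 1
  · exact propext ⟨fun h => by linarith, fun h => by linarith⟩
  · ring_nf

theorem psiMinus_add_psiPlus (hχ : IsKernel χ) {u : ℝ} (hu : u ∈ Ioo 1 (exp 1)) :
    psiMinus χ u + psiPlus χ u = 1 := by
  have hu0 : 0 < u := one_pos.trans hu.1
  have hlog : log u ∈ Ioo 0 1 := ⟨log_pos hu.1, by simpa using log_lt_log hu0 hu.2⟩
  have habs : Summable fun k : ℤ => |χ (u * exp (-k))| := by
    simpa only [mul_comm] using hχ.1 u hu0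
  rw [psiMinus, psiPlus, ← Summable.tsum_add (.of_norm_bounded habs fun k => by split_ifs <;> simp)
    (.of_norm_bounded habs fun k => by split_ifs <;> simp), ← (hχ.2.1 u hu0).tsum_eq]
  refine tsum_congr fun k => ?_
  have hk : (k : ℝ) ≠ log u := fun h => by
    obtain ⟨h0, h1⟩ := hlog
    rw [← h] at h0 h1
    norm_cast at h0 h1
    omega
  rcases hk.lt_or_gt with h | h <;> simp [h, h.not_gt, mul_comm]

end IsKernel

/-- The value approached by `expSamp χ f w t` when `w * log t = x`, for `f` jumping from `fm`
to `fp` at `t`. -/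
noncomputable def jumpValue (χ : ℝ → ℝ) (fp fm x : ℝ) : ℝ :=
  fm + (fp - fm) * psiMinus χ (exp (Int.fract x))

theorem jumpValue_eq_of_forall_psiMinus_eq {χ : ℝ → ℝ} {α : ℝ}
    (hα : ∀ u ∈ Ioo 1 (exp 1), psiMinus χ u = α) (fp fm : ℝ) {x : ℝ} (hx : ∀ m : ℤ, x ≠ m) :
    jumpValue χ fp fm x = α * fp + (1 - α) * fm := by
  have h0 : 0 < Int.fract x := Int.fract_pos.mpr (hx _)
  rw [jumpValue, hα _ ⟨one_lt_exp_iff.mpr h0, exp_lt_exp.mpr (Int.fract_lt_one _)⟩]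
  ring

theorem IsKernel.hasSum_mul_jump {χ : ℝ → ℝ} (hχ : IsKernel χ) (fp fm x : ℝ) :
    HasSum (fun k : ℤ => χ (exp (x - k)) * if x < k then fp else fm) (jumpValue χ fp fm x) := by
  have h := ((hχ.hasSum x).mul_left fm).add ((hχ.hasSum_psiMinus_exp_fract x).mul_left (fp - fm))
  rw [mul_one] at h
  exact h.congr_fun fun k => by split_ifs <;> ring

/-- Where `rₖ ≥ N`, the weight `rₖ ^ ν / N ^ ν ≥ 1` lets the moment of `c` absorb the bound `D`
on `d`. -/
theorem abs_tsum_mul_le_of_near_far {c d r : ℤ → ℝ} {ε D K C N ν : ℝ} (hν : 0 < ν) (hN : 0 < N)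
    (hε : 0 ≤ ε) (hr : ∀ k, 0 ≤ r k) (hc : Summable fun k => |c k|) (hcK : ∑' k, |c k| ≤ K)
    (hcr : Summable fun k => |c k| * r k ^ ν) (hcrC : ∑' k, |c k| * r k ^ ν ≤ C)
    (hd : ∀ k, |d k| ≤ D) (hnear : ∀ k, r k < N → |d k| ≤ ε) :
    |∑' k, c k * d k| ≤ ε * K + D / N ^ ν * C := by
  have hD : 0 ≤ D := (abs_nonneg _).trans (hd 0)
  have hNν : 0 < N ^ ν := rpow_pos_of_pos hN ν
  have hpt : ∀ k, |c k * d k| ≤ ε * |c k| + D / N ^ ν * (|c k| * r k ^ ν) := by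
    intro k
    have hfar : 0 ≤ D / N ^ ν * (|c k| * r k ^ ν) :=
      mul_nonneg (div_nonneg hD hNν.le) (mul_nonneg (abs_nonneg _) (rpow_nonneg (hr k) ν))
    rw [abs_mul]
    by_cases hk : r k < N
    · nlinarith [hnear k hk, abs_nonneg (c k)]
    · have hw : 1 ≤ r k ^ ν / N ^ ν := by
        rw [one_le_div hNν]
        exact rpow_le_rpow hN.le (not_lt.mp hk) hν.le
      have : |c k| * D ≤ D / N ^ ν * (|c k| * r k ^ ν) := by
        calc |c k| * D ≤ |c k| * D * (r k ^ ν / N ^ ν) :=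
              le_mul_of_one_le_right (mul_nonneg (abs_nonneg _) hD) hw
          _ = D / N ^ ν * (|c k| * r k ^ ν) := by ring
      nlinarith [hd k, abs_nonneg (c k), mul_nonneg hε (abs_nonneg (c k))]
  have hmaj : Summable fun k => ε * |c k| + D / N ^ ν * (|c k| * r k ^ ν) :=
    (hc.mul_left ε).add (hcr.mul_left _)
  have hcd : Summable fun k => |c k * d k| :=
    hmaj.of_nonneg_of_le (fun k => abs_nonneg _) hpt
  calc |∑' k, c k * d k| ≤ ∑' k, |c k * d k| := by
        simpa only [Real.norm_eq_abs] using norm_tsum_le_tsum_norm (f := fun k => c k * d k) hcd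
    _ ≤ ∑' k, (ε * |c k| + D / N ^ ν * (|c k| * r k ^ ν)) := hcd.tsum_le_tsum hpt hmaj
    _ = ε * ∑' k, |c k| + D / N ^ ν * ∑' k, |c k| * r k ^ ν := by
        rw [(hc.mul_left ε).tsum_add (hcr.mul_left _), tsum_mul_left, tsum_mul_left]
    _ ≤ ε * K + D / N ^ ν * C := by
        gcongr

theorem exists_abs_sub_jump_lt {f : ℝ → ℝ} {t fp fm ε : ℝ} (ht : 0 < t)
    (hfp : Tendsto f (𝓝[>] t) (𝓝 fp)) (hfm : Tendsto f (𝓝[<] t) (𝓝 fm)) (hε : 0 < ε) :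
    ∃ η > 0, ∀ h : ℝ, h ≠ 0 → |h| < η → |f (t * exp h) - if 0 < h then fp else fm| < ε := by
  have hcont : Continuous fun h : ℝ => t * exp h := continuous_const.mul continuous_exp
  have hright : Tendsto (fun h => t * exp h) (𝓝[>] 0) (𝓝[>] t) := by
    simpa using hcont.continuousWithinAt.tendsto_nhdsWithin (x := 0) (s := Ioi 0) (t := Ioi t)
      fun h (hh : 0 < h) => show t < t * exp h by nlinarith [one_lt_exp_iff.mpr hh]
  have hleft : Tendsto (fun h => t * exp h) (𝓝[<] 0) (𝓝[<] t) := by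
    simpa using hcont.continuousWithinAt.tendsto_nhdsWithin (x := 0) (s := Iio 0) (t := Iio t)
      fun h (hh : h < 0) => show t * exp h < t by nlinarith [exp_lt_one_iff.mpr hh]
  obtain ⟨η₁, hη₁, h₁⟩ := Metric.tendsto_nhdsWithin_nhds.mp (hfp.comp hright) ε hε
  obtain ⟨η₂, hη₂, h₂⟩ := Metric.tendsto_nhdsWithin_nhds.mp (hfm.comp hleft) ε hε
  refine ⟨min η₁ η₂, lt_min hη₁ hη₂, fun h h0 hη => ?_⟩
  rw [← Real.dist_eq]
  rw [← Real.dist_0_eq_abs] at hη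
  rcases h0.lt_or_gt with hneg | hpos
  · rw [if_neg hneg.not_gt]
    exact h₂ hneg (hη.trans_le (min_le_right _ _))
  · rw [if_pos hpos]
    exact h₁ hpos (hη.trans_le (min_le_left _ _))

theorem expSamp_eq_tsum (χ f : ℝ → ℝ) {w t : ℝ} (hw : w ≠ 0) (ht : 0 < t) :
    expSamp χ f w t =
      ∑' k : ℤ, χ (exp (w * log t - k)) * f (t * exp ((k - w * log t) / w)) := by
  refine tsum_congr fun k => ?_
  rw [rpow_def_of_pos ht, ← exp_add, neg_add_eq_sub, mul_comm (log t)]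
  congr 2
  rw [← exp_log ht, ← exp_add, exp_log ht]
  congr 1
  field_simp
  ring

theorem IsKernel.tendsto_expSamp_sub_jumpValue {χ f : ℝ → ℝ} {B t fp fm : ℝ} (hχ : IsKernel χ)
    (hf : ∀ x : ℝ, 0 < x → |f x| ≤ B) (ht : 0 < t)
    (hfp : Tendsto f (𝓝[>] t) (𝓝 fp)) (hfm : Tendsto f (𝓝[<] t) (𝓝 fm)) :
    Tendsto (fun w => expSamp χ f w t - jumpValue χ fp fm (w * log t))
      (atTop ⊓ 𝓟 {w : ℝ | ∀ m : ℤ, w * log t ≠ m}) (𝓝 0) := by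
  obtain ⟨ν, hν, C, hC⟩ := hχ.exists_moment
  obtain ⟨K, hK⟩ := hχ.exists_tsum_abs_le
  set D := B + (|fp| + |fm|)
  rw [Metric.tendsto_nhds]
  intro ε hε
  obtain ⟨N, hNC, hN⟩ : ∃ N : ℝ, D / N ^ ν * C < ε / 2 ∧ 0 < N :=
    ((((tendsto_const_nhds (x := D)).div_atTop (tendsto_rpow_atTop hν)).mul_const C).eventually
      (gt_mem_nhds (by simpa using half_pos hε))).and (eventually_gt_atTop 0) |>.exists
  set δ := ε / (2 * (|K| + 1))
  have hδ : 0 < δ := by positivity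
  obtain ⟨η, hη, hjump⟩ := exists_abs_sub_jump_lt ht hfp hfm hδ
  rw [eventually_inf_principal]
  filter_upwards [eventually_gt_atTop 0, eventually_ge_atTop (N / η)] with w hw hwN hx
  have hNw : N ≤ η * w := by rwa [div_le_iff₀ hη, mul_comm] at hwN
  set x := w * log t
  have hS : HasSum (fun k : ℤ => χ (exp (x - k)) * f (t * exp ((k - x) / w)))
      (expSamp χ f w t) := by
    rw [expSamp_eq_tsum χ f hw.ne' ht]
    refine Summable.hasSum (.of_norm_bounded ((hχ.summable_abs x).mul_right B) fun k => ?_)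
    rw [Real.norm_eq_abs, abs_mul]
    exact mul_le_mul_of_nonneg_left (hf _ (by positivity)) (abs_nonneg _)
  have hd : ∀ k : ℤ, |f (t * exp ((k - x) / w)) - if x < k then fp else fm| ≤ D := by
    intro k
    refine (abs_sub _ _).trans (add_le_add (hf _ (by positivity)) ?_)
    split_ifs <;> linarith [abs_nonneg fp, abs_nonneg fm]
  have hnear : ∀ k : ℤ, |(k : ℝ) - x| < N →
      |f (t * exp ((k - x) / w)) - if x < k then fp else fm| ≤ δ := by
    intro k hk
    have hne : ((k : ℝ) - x) / w ≠ 0 := div_ne_zero (sub_ne_zero.mpr (hx k).symm) hw.ne'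
    have hsmall : |((k : ℝ) - x) / w| < η := by
      rw [abs_div, abs_of_pos hw, div_lt_iff₀ hw]
      linarith
    have := hjump _ hne hsmall
    simp only [div_pos_iff_of_pos_right hw, sub_pos] at this
    exact this.le
  rw [dist_zero_right, Real.norm_eq_abs, ← (hS.sub (hχ.hasSum_mul_jump fp fm x)).tsum_eq]
  simp_rw [← mul_sub]
  calc _ ≤ δ * K + D / N ^ ν * C :=
        abs_tsum_mul_le_of_near_far hν hN hδ.le (fun k => abs_nonneg _) (hχ.summable_abs x)
          (hK x) (hC x).1 (hC x).2 hd hnear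
    _ < ε := by
        have : δ * K ≤ ε / 2 := by
          calc δ * K ≤ δ * (|K| + 1) := by gcongr; linarith [le_abs_self K]
            _ = ε / 2 := by simp only [δ]; field_simp
        linarith

theorem exists_seq_tendsto_fract_mul_eq {L y : ℝ} (hL : L ≠ 0) (hy : y ∈ Ioo (0 : ℝ) 1) :
    ∃ w : ℕ → ℝ, Tendsto w atTop (atTop ⊓ 𝓟 {w : ℝ | ∀ m : ℤ, w * L ≠ m}) ∧
      ∀ n, Int.fract (w n * L) = y := by
  have hfract : ∀ n : ℕ, Int.fract ((n / |L| + y / L) * L) = y := by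
    intro n
    have : (n / |L| + y / L) * L = ((if 0 < L then n else -n : ℤ) : ℝ) + y := by
      rcases hL.lt_or_gt with h | h
      · simp only [h.not_gt, if_false, abs_of_neg h]; field_simp; push_cast; ring
      · simp only [h, if_true, abs_of_pos h]; field_simp; push_cast; ring
    rw [this, Int.fract_intCast_add, Int.fract_eq_self.mpr ⟨hy.1.le, hy.2⟩]
  refine ⟨fun n => n / |L| + y / L, tendsto_inf.mpr ⟨?_, tendsto_principal.mpr
    (.of_forall fun n m h => ?_)⟩, hfract⟩
  · exact tendsto_atTop_add_const_right _ _
      (tendsto_natCast_atTop_atTop.atTop_div_const (abs_pos.mpr hL))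
  · have := hfract n
    rw [h, Int.fract_intCast] at this
    exact hy.1.ne this

/-- Behaviour at a jump discontinuity along w with w·log t ∉ ℤ. -/
theorem stmt4 (χ f : ℝ → ℝ) (hχ : IsKernel χ)
    (B : ℝ) (hf : ∀ x : ℝ, 0 < x → |f x| ≤ B)
    (t : ℝ) (ht : 0 < t) (fp fm : ℝ)
    (hfp : Filter.Tendsto f (nhdsWithin t (Set.Ioi t)) (nhds fp))
    (hfm : Filter.Tendsto f (nhdsWithin t (Set.Iio t)) (nhds fm))
    (hjump : fp ≠ fm) (α : ℝ)
    (hNe : (Filter.atTop ⊓ Filter.principal {w : ℝ | ∀ m : ℤ, w * Real.log t ≠ (m : ℝ)}).NeBot) :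
    (Filter.Tendsto (fun w => expSamp χ f w t)
        (Filter.atTop ⊓ Filter.principal {w : ℝ | ∀ m : ℤ, w * Real.log t ≠ (m : ℝ)})
        (nhds (α * fp + (1 - α) * fm))
      ↔ ∀ u ∈ Set.Ioo (1 : ℝ) (Real.exp 1), psiMinus χ u = α) ∧
    ((∀ u ∈ Set.Ioo (1 : ℝ) (Real.exp 1), psiMinus χ u = α) ↔
      ∀ u ∈ Set.Ioo (1 : ℝ) (Real.exp 1), psiPlus χ u = 1 - α) := by
  have hL : log t ≠ 0 := fun h => by
    obtain ⟨w, hw⟩ := hNe.nonempty_of_mem (mem_inf_of_right (mem_principal_self _))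
    exact hw 0 (by simp [h])
  have hE := hχ.tendsto_expSamp_sub_jumpValue hf ht hfp hfm
  have hsplit := fun u (hu : u ∈ Ioo 1 (exp 1)) => hχ.psiMinus_add_psiPlus hu
  refine ⟨⟨fun hS u hu => ?_, fun hα => ?_⟩, ⟨fun h u hu => by linarith [hsplit u hu, h u hu],
    fun h u hu => by linarith [hsplit u hu, h u hu]⟩⟩
  · obtain ⟨w, hw, hfract⟩ := exists_seq_tendsto_fract_mul_eq hL
      ⟨log_pos hu.1, by simpa using log_lt_log (one_pos.trans hu.1) hu.2⟩
    have hJ : ∀ n, jumpValue χ fp fm (w n * log t) = fm + (fp - fm) * psiMinus χ u := fun n => by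
      rw [jumpValue, hfract n, exp_log (one_pos.trans hu.1)]
    have hlim : Tendsto (fun n => jumpValue χ fp fm (w n * log t)) atTop
        (𝓝 (α * fp + (1 - α) * fm)) := by
      simpa [Function.comp_def] using (hS.sub hE).comp hw
    simp only [hJ] at hlim
    have := tendsto_nhds_unique tendsto_const_nhds hlim
    exact mul_left_cancel₀ (sub_ne_zero.mpr hjump) (by linear_combination this)
  · have hJ : ∀ᶠ w in atTop ⊓ 𝓟 {w : ℝ | ∀ m : ℤ, w * log t ≠ m},
        α * fp + (1 - α) * fm = jumpValue χ fp fm (w * log t) :=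
      eventually_inf_principal.mpr (.of_forall fun w hw =>
        (jumpValue_eq_of_forall_psiMinus_eq hα fp fm hw).symm)
    simpa using hE.add (tendsto_const_nhds.congr' hJ)
end

section
/- Let χ be a continuous kernel with χ(1) = 0, for which the Mellin–Poisson summation formula holds for χ₀ := χ·1_{(0,1)}. Then ψ_χ⁻(u) = α for all u ∈ [1, e) if and only if ∫₀¹ χ(u) u^{2kπi} du/u = 0 for all integers k ≠ 0 and = α for k = 0. -/
/-!
Writing `u = e^{-t}`, Mellin–Poisson summation expresses `ψ⁻(e^{-t})` as the trigonometric series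
`∑ c_k e^{2πikt}` whose coefficients `c_k` are the Mellin coefficients of `χ` on `(0, 1)`.
Since `ψ⁻(e^n u) = ψ⁻(u)` for `n ∈ ℤ`, constancy on `[1, e)` is constancy on all of `(0, ∞)`,
i.e. constancy of the series in `t`. The series converges at `t = 0`, so `∑ |c_k| < ∞`, and
integrating against `e^{-2πint}` over a period (dominated convergence) recovers `c_n = α δ_{n0}`.
-/

open Real Filter Set MeasureTheory

open Complex

theorem integral_exp_two_pi_I_int_mul (m : ℤ) :
    ∫ t in (0 : ℝ)..1, cexp (2 * π * I * m * t) = if m = 0 then 1 else 0 := by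
  split_ifs with hm
  · simp [hm]
  · have hc : 2 * π * I * m ≠ 0 := by simp [hm, pi_ne_zero, I_ne_zero]
    rw [integral_exp_mul_complex hc, mul_comm _ (m : ℂ), ofReal_one, mul_one,
      exp_int_mul_two_pi_mul_I]
    simp

theorem norm_exp_two_pi_I_int_mul (m : ℤ) (t : ℝ) : ‖cexp (2 * π * I * m * t)‖ = 1 := by
  simp [Complex.norm_exp]

theorem intervalIntegral_mul_exp_eq_of_hasSum {c : ℤ → ℂ} {f : ℝ → ℂ} (hc : Summable c)
    (hf : ∀ t : ℝ, HasSum (fun k => c k * cexp (2 * π * I * k * t)) (f t)) (n : ℤ) :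
    ∫ t in (0 : ℝ)..1, f t * cexp (-(2 * π * I * n * t)) = c n := by
  have hshift : ∀ t : ℝ, HasSum (fun k => c k * cexp (2 * π * I * (k - n : ℤ) * t))
      (f t * cexp (-(2 * π * I * n * t))) := by
    intro t
    have hterm : ∀ k : ℤ, c k * cexp (2 * π * I * (k - n : ℤ) * t) =
        c k * cexp (2 * π * I * k * t) * cexp (-(2 * π * I * n * t)) := by
      intro k
      rw [mul_assoc (c k), ← Complex.exp_add]
      push_cast
      ring_nf
    simpa only [hterm] using (hf t).mul_right (cexp (-(2 * π * I * n * t)))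
  have hswap := intervalIntegral.hasSum_integral_of_dominated_convergence
    (a := 0) (b := 1) (μ := volume) (fun k _ => ‖c k‖) (fun k => by fun_prop)
    (fun k => ae_of_all _ fun t _ => by rw [norm_mul, norm_exp_two_pi_I_int_mul, mul_one])
    (ae_of_all _ fun _ _ => (summable_norm_iff.mpr hc)) intervalIntegrable_const
    (ae_of_all _ fun t _ => hshift t)
  refine hswap.unique ?_
  simp only [intervalIntegral.integral_const_mul, integral_exp_two_pi_I_int_mul, sub_eq_zero,
    mul_ite, mul_one, mul_zero]
  simpa using hasSum_single (f := fun k => if k = n then c k else 0) n fun k hk => if_neg hk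

theorem eq_ite_of_hasSum_exp_const {c : ℤ → ℂ} {a : ℂ}
    (h : ∀ t : ℝ, HasSum (fun k => c k * cexp (2 * π * I * k * t)) a) (n : ℤ) :
    c n = if n = 0 then a else 0 := by
  have hc : Summable c := by simpa using (h 0).summable
  have hneg : ∀ t : ℝ, -(2 * π * I * n * t) = 2 * π * I * (-n : ℤ) * t := by
    intro t; push_cast; ring
  rw [← intervalIntegral_mul_exp_eq_of_hasSum hc h n, intervalIntegral.integral_const_mul]
  simp only [hneg, integral_exp_two_pi_I_int_mul, neg_eq_zero, mul_ite, mul_one, mul_zero]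

theorem ofReal_exp_cpow (x : ℝ) (s : ℂ) : (Real.exp x : ℂ) ^ s = cexp (x * s) := by
  rw [cpow_def_of_ne_zero (ofReal_ne_zero.mpr (Real.exp_pos x).ne'),
    ← ofReal_log (Real.exp_pos x).le, Real.log_exp]

theorem setIntegral_Ioi_mul_ite_lt_one (g h : ℝ → ℂ) :
    ∫ v in Ioi (0 : ℝ), g v * (if v < 1 then h v else 0) = ∫ v in Ioo (0 : ℝ) 1, g v * h v := by
  have hind : ∀ v : ℝ,
      g v * (if v < 1 then h v else 0) = (Iio 1).indicator (fun v => g v * h v) v := by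
    intro v
    by_cases hv : v < 1 <;> simp [hv]
  simp_rw [hind]
  rw [setIntegral_indicator measurableSet_Iio, Ioi_inter_Iio]

theorem psiMinus_exp_intCast_mul (χ : ℝ → ℝ) (n : ℤ) {u : ℝ} (hu : 0 < u) :
    psiMinus χ (Real.exp n * u) = psiMinus χ u := by
  unfold psiMinus
  rw [← (Equiv.addRight n).tsum_eq]
  refine tsum_congr fun j => ?_
  have hlog : Real.log (Real.exp n * u) = n + Real.log u := by
    rw [Real.log_mul (Real.exp_ne_zero _) hu.ne', Real.log_exp]
  have harg : Real.exp n * u * Real.exp (-((j : ℝ) + n)) = u * Real.exp (-j) := by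
    rw [mul_comm (Real.exp n) u, mul_assoc, ← Real.exp_add]
    ring_nf
  simp only [Equiv.coe_addRight, hlog, harg, Int.cast_add, add_comm (n : ℝ), add_lt_add_iff_right]

theorem psiMinus_eq_of_forall_Ico {χ : ℝ → ℝ} {α : ℝ}
    (h : ∀ u ∈ Ico (1 : ℝ) (Real.exp 1), psiMinus χ u = α) {u : ℝ} (hu : 0 < u) :
    psiMinus χ u = α := by
  set n := ⌊Real.log u⌋
  have hv : Real.exp (Real.log u - n) ∈ Ico (1 : ℝ) (Real.exp 1) := by
    refine ⟨Real.one_le_exp (sub_nonneg.mpr (Int.floor_le _)), Real.exp_lt_exp.mpr ?_⟩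
    linarith [Int.lt_floor_add_one (Real.log u)]
  have hdecomp : Real.exp n * Real.exp (Real.log u - n) = u := by
    rw [← Real.exp_add, add_sub_cancel, Real.exp_log hu]
  rw [← hdecomp, psiMinus_exp_intCast_mul χ n (Real.exp_pos _), h _ hv]

theorem stmt7_general (χ : ℝ → ℝ) (α : ℝ)
    (hMP : ∀ u : ℝ, 0 < u →
      HasSum (fun k : ℤ =>
        (∫ v in Set.Ioi (0 : ℝ),
            (v : ℂ) ^ (2 * (Real.pi : ℂ) * (k : ℂ) * Complex.I - 1) *
              (if v < 1 then (χ v : ℂ) else 0)) *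
          (u : ℂ) ^ (-(2 * (Real.pi : ℂ) * (k : ℂ) * Complex.I)))
        ((psiMinus χ u : ℂ))) :
    (∀ u ∈ Set.Ico (1 : ℝ) (Real.exp 1), psiMinus χ u = α) ↔
      ∀ k : ℤ,
        (∫ v in Set.Ioo (0 : ℝ) 1,
            (v : ℂ) ^ (2 * (Real.pi : ℂ) * (k : ℂ) * Complex.I - 1) * (χ v : ℂ))
          = if k = 0 then (α : ℂ) else 0 := by
  simp only [setIntegral_Ioi_mul_ite_lt_one] at hMP
  constructor
  · intro hIco
    refine eq_ite_of_hasSum_exp_const fun t => ?_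
    have hsum := hMP (Real.exp (-t)) (Real.exp_pos _)
    rw [psiMinus_eq_of_forall_Ico hIco (Real.exp_pos _)] at hsum
    convert hsum using 2 with k
    rw [ofReal_exp_cpow]
    push_cast
    ring_nf
  · intro hc u hu
    have hsum := hMP u (by linarith [hu.1])
    simp only [hc, ite_mul, zero_mul] at hsum
    have hterms :
        (fun k : ℤ => if k = 0 then (α : ℂ) * (u : ℂ) ^ (-(2 * (π : ℂ) * k * I)) else 0) =
          fun k => if k = 0 then (α : ℂ) else 0 := by
      ext k
      split_ifs with hk <;> simp [hk]
    rw [hterms] at hsum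
    exact_mod_cast hsum.unique (hasSum_ite_eq 0 (α : ℂ))

/-- Mellin condition for the constancy of ψ⁻, assuming Mellin–Poisson summation for
χ₀ = χ·1_{(0,1)}. -/
theorem stmt7 (χ : ℝ → ℝ) (hχ : IsKernel χ) (hcont : ContinuousOn χ (Set.Ioi 0))
    (hχ1 : χ 1 = 0) (α : ℝ)
    (hMP : ∀ u : ℝ, 0 < u →
      HasSum (fun k : ℤ =>
        (∫ v in Set.Ioi (0 : ℝ),
            (v : ℂ) ^ (2 * (Real.pi : ℂ) * (k : ℂ) * Complex.I - 1) *
              (if v < 1 then (χ v : ℂ) else 0)) *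
          (u : ℂ) ^ (-(2 * (Real.pi : ℂ) * (k : ℂ) * Complex.I)))
        ((psiMinus χ u : ℂ))) :
    (∀ u ∈ Set.Ico (1 : ℝ) (Real.exp 1), psiMinus χ u = α) ↔
      ∀ k : ℤ,
        (∫ v in Set.Ioo (0 : ℝ) 1,
            (v : ℂ) ^ (2 * (Real.pi : ℂ) * (k : ℂ) * Complex.I - 1) * (χ v : ℂ))
          = if k = 0 then (α : ℂ) else 0 :=
  stmt7_general χ α hMP
end

section
/- Let χ be a kernel with M_ν(χ) < ∞ for some 0 < ν < 1, and M₀(χ) < ∞. Let f: ℝ⁺ → ℝ be bounded and log-uniformly continuous. Then for sufficiently large w > 0 and every t ∈ ℝ⁺: |(S_w^χ f)(t) - f(t)| ≤ ω(f, w^{-ν})·[M_ν(χ) + 2 M₀(χ)] + 2^{ν+1} ‖f‖_∞ M_ν(χ) w^{-ν}. -/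
open Real Filter Set MeasureTheory

/-!
Put `u = t ^ w` and `g = f ∘ exp`, so that `ω(f, δ)` is the ordinary modulus of continuity of `g`.
Since the kernel sums to one, the error is `∑ χ(e^{-k}u) (g(k/w) - g(log t))`, and
`|k/w - log t| = r` with `r = |k - log u| / w`. Chaining the modulus gives
`|g x - g y| ≤ (1 + |x - y| / δ) ω(g, δ)`; for `δ = w^{-ν}` and `r ≤ 1` this is at most
`ω (1 + |k - log u|^ν)` because `r ≤ r^ν`, while for `r > 1` the crude bound
`2‖f‖_∞ ≤ 2‖f‖_∞ r^ν = 2‖f‖_∞ w^{-ν} |k - log u|^ν` applies. Summing against `|χ(e^{-k}u)|`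
produces the moments `M₀(χ)` and `M_ν(χ)`.
-/

section Modulus

variable {g : ℝ → ℝ} {δ ω : ℝ}

theorem abs_sub_le_nat_mul_of_modulus (hg : ∀ x y, |x - y| ≤ δ → |g x - g y| ≤ ω) :
    ∀ (n : ℕ) {x y : ℝ}, |x - y| ≤ n * δ → |g x - g y| ≤ n * ω
  | 0, x, y, h => by
    have : x = y := sub_eq_zero.1 (abs_nonpos_iff.1 (by simpa using h))
    simp [this]
  | n + 1, x, y, h => by
    have hn : (0 : ℝ) < n + 1 := by positivity
    push_cast at h ⊢
    set z := y + n / (n + 1) * (x - y)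
    have hxz : |x - z| ≤ δ := by
      have : x - z = (x - y) / (n + 1) := by simp only [z]; field_simp; ring
      rw [this, abs_div, abs_of_pos hn, div_le_iff₀ hn]
      linarith
    have hzy : |z - y| ≤ n * δ := by
      have : z - y = n / (n + 1) * (x - y) := by ring
      rw [this, abs_mul, abs_of_nonneg (by positivity)]
      calc n / (n + 1) * |x - y| ≤ n / (n + 1) * ((n + 1) * δ) := by gcongr
        _ = n * δ := by field_simp
    calc |g x - g y| ≤ |g x - g z| + |g z - g y| := abs_sub_le _ _ _
      _ ≤ ω + n * ω := add_le_add (hg _ _ hxz) (abs_sub_le_nat_mul_of_modulus hg n hzy)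
      _ = (n + 1) * ω := by ring

theorem abs_sub_le_one_add_div_mul_of_modulus (hg : ∀ x y, |x - y| ≤ δ → |g x - g y| ≤ ω)
    (hδ : 0 < δ) (hω : 0 ≤ ω) (x y : ℝ) : |g x - g y| ≤ (1 + |x - y| / δ) * ω := by
  have hceil := Nat.ceil_lt_add_one (div_nonneg (abs_nonneg (x - y)) hδ.le)
  calc |g x - g y| ≤ ⌈|x - y| / δ⌉₊ * ω :=
        abs_sub_le_nat_mul_of_modulus hg _ ((div_le_iff₀ hδ).1 (Nat.le_ceil _))
    _ ≤ (1 + |x - y| / δ) * ω := by gcongr; linarith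

theorem abs_sub_le_of_modulus_of_abs_le {N w ν : ℝ} (hgN : ∀ x, |g x| ≤ N)
    (hg : ∀ x y, |x - y| ≤ w ^ (-ν) → |g x - g y| ≤ ω) (hω : 0 ≤ ω) (hw : 0 < w)
    (hν0 : 0 ≤ ν) (hν1 : ν ≤ 1) (x y : ℝ) :
    |g x - g y| ≤ ω * (1 + (w * |x - y|) ^ ν) + 2 * N * w ^ (-ν) * (w * |x - y|) ^ ν := by
  have hN : 0 ≤ N := (abs_nonneg _).trans (hgN 0)
  have hxy := abs_nonneg (x - y)
  have hscale : w ^ (-ν) * (w * |x - y|) ^ ν = |x - y| ^ ν := by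
    rw [mul_rpow hw.le hxy, ← mul_assoc, ← rpow_add hw, neg_add_cancel, rpow_zero, one_mul]
  rw [mul_assoc (2 * N), hscale]
  rcases le_or_gt |x - y| 1 with hnear | hfar
  · have hdiv : |x - y| / w ^ (-ν) ≤ (w * |x - y|) ^ ν := by
      rw [rpow_neg hw.le, div_inv_eq_mul, mul_rpow hw.le hxy, mul_comm]
      gcongr
      exact self_le_rpow_of_le_one hxy hnear hν1
    calc |g x - g y| ≤ (1 + |x - y| / w ^ (-ν)) * ω :=
          abs_sub_le_one_add_div_mul_of_modulus hg (rpow_pos_of_pos hw _) hω x y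
      _ ≤ ω * (1 + (w * |x - y|) ^ ν) := by rw [mul_comm]; gcongr
      _ ≤ _ := le_add_of_nonneg_right (by positivity)
  · calc |g x - g y| ≤ |g x| + |g y| := abs_sub _ _
      _ ≤ 2 * N * 1 := by linarith [hgN x, hgN y]
      _ ≤ 2 * N * |x - y| ^ ν := by gcongr; exact one_le_rpow hfar.le hν0
      _ ≤ _ := le_add_of_nonneg_left (by positivity)

end Modulus

theorem abs_tsum_mul_sub_le {ι : Type*} {c F : ι → ℝ} {y : ℝ} (hc : HasSum c 1)
    (hs : Summable fun i => |c i| * |F i - y|) :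
    |∑' i, c i * F i - y| ≤ ∑' i, |c i| * |F i - y| := by
  have hnorm : (fun i => ‖c i * (F i - y)‖) = fun i => |c i| * |F i - y| := by
    simp only [norm_mul, Real.norm_eq_abs]
  have hs' : Summable fun i => c i * (F i - y) := .of_norm (hnorm ▸ hs)
  have hsplit : ∑' i, c i * F i = ∑' i, c i * (F i - y) + y := by
    simpa [mul_sub] using (hs'.hasSum.add (hc.mul_right y)).tsum_eq
  rw [hsplit, add_sub_cancel_right, ← Real.norm_eq_abs, ← hnorm]
  exact norm_tsum_le_tsum_norm (hnorm ▸ hs)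

theorem abs_tsum_mul_sub_le_of_moments {ι : Type*} {c F m : ι → ℝ} {y A B M₀ M : ℝ}
    (hc : HasSum c 1) (hcs : Summable fun i => |c i|) (hcm : Summable fun i => |c i| * m i)
    (hF : ∀ i, |F i - y| ≤ A * (1 + m i) + B * m i) (hA : 0 ≤ A) (hB : 0 ≤ B)
    (h₀ : ∑' i, |c i| ≤ M₀) (hM : ∑' i, |c i| * m i ≤ M) :
    |∑' i, c i * F i - y| ≤ A * M₀ + (A + B) * M := by
  have hterm (i : ι) : |c i| * |F i - y| ≤ A * |c i| + (A + B) * (|c i| * m i) :=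
    calc |c i| * |F i - y| ≤ |c i| * (A * (1 + m i) + B * m i) := by gcongr; exact hF i
      _ = _ := by ring
  have hbound : Summable fun i => A * |c i| + (A + B) * (|c i| * m i) :=
    (hcs.mul_left A).add (hcm.mul_left _)
  have hs : Summable fun i => |c i| * |F i - y| :=
    .of_nonneg_of_le (fun _ => by positivity) hterm hbound
  calc |∑' i, c i * F i - y| ≤ ∑' i, |c i| * |F i - y| := abs_tsum_mul_sub_le hc hs
    _ ≤ ∑' i, (A * |c i| + (A + B) * (|c i| * m i)) := hs.tsum_le_tsum hterm hbound
    _ = A * ∑' i, |c i| + (A + B) * ∑' i, |c i| * m i := by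
        rw [(hcs.mul_left A).tsum_add (hcm.mul_left _), tsum_mul_left, tsum_mul_left]
    _ ≤ A * M₀ + (A + B) * M := by gcongr

theorem abs_comp_exp_sub_le_logMod {f : ℝ → ℝ}
    (hf : BddAbove (Set.range fun x : {x : ℝ // 0 < x} => |f x.1|)) {δ x y : ℝ}
    (h : |x - y| ≤ δ) : |f (exp x) - f (exp y)| ≤ logMod f δ := by
  refine le_csSup ⟨2 * supNormPos f, ?_⟩ ⟨exp x, exp y, exp_pos x, exp_pos y, by simpa, rfl⟩
  rintro d ⟨p, q, hp, hq, -, rfl⟩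
  have hbound (r : ℝ) (hr : 0 < r) : |f r| ≤ supNormPos f := le_ciSup hf ⟨r, hr⟩
  linarith [abs_sub (f p) (f q), hbound p hp, hbound q hq]

theorem logMod_nonneg {f : ℝ → ℝ}
    (hf : BddAbove (Set.range fun x : {x : ℝ // 0 < x} => |f x.1|)) {δ : ℝ} (hδ : 0 ≤ δ) :
    0 ≤ logMod f δ :=
  (abs_nonneg _).trans (abs_comp_exp_sub_le_logMod hf (x := 0) (y := 0) (by simpa using hδ))

theorem abs_sub_le_logMod_mul_add {f : ℝ → ℝ}
    (hf : BddAbove (Set.range fun x : {x : ℝ // 0 < x} => |f x.1|)) {w ν t : ℝ} (hw : 0 < w)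
    (hν0 : 0 ≤ ν) (hν1 : ν ≤ 1) (ht : 0 < t) (x : ℝ) :
    |f (exp (x / w)) - f t| ≤ logMod f (w ^ (-ν)) * (1 + |x - log (t ^ w)| ^ ν) +
      2 * supNormPos f * w ^ (-ν) * |x - log (t ^ w)| ^ ν := by
  have hdist : w * |x / w - log t| = |x - log (t ^ w)| := by
    rw [log_rpow ht, ← abs_of_pos hw, ← abs_mul, abs_of_pos hw]
    congr 1
    field_simp
  have := abs_sub_le_of_modulus_of_abs_le (g := f ∘ exp)
    (fun x => le_ciSup hf ⟨exp x, exp_pos x⟩) (fun _ _ => abs_comp_exp_sub_le_logMod hf)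
    (logMod_nonneg hf (rpow_pos_of_pos hw _).le) hw hν0 hν1 (x / w) (log t)
  rwa [hdist, Function.comp_apply, Function.comp_apply, exp_log ht] at this

section Moment

variable {χ : ℝ → ℝ} {u : ℝ}

theorem tsum_le_absMoment {ν : ℝ} (hχ : BddAbove (Set.range fun u : {u : ℝ // 0 < u} =>
      ∑' k : ℤ, |χ (exp (-(k : ℝ)) * u.1)| * |(k : ℝ) - log u.1| ^ ν)) (hu : 0 < u) :
    ∑' k : ℤ, |χ (exp (-(k : ℝ)) * u)| * |(k : ℝ) - log u| ^ ν ≤ absMoment χ ν :=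
  le_ciSup hχ ⟨u, hu⟩

theorem tsum_abs_le_absMoment_zero (hχ : BddAbove (Set.range fun u : {u : ℝ // 0 < u} =>
      ∑' k : ℤ, |χ (exp (-(k : ℝ)) * u.1)| * |(k : ℝ) - log u.1| ^ (0 : ℝ))) (hu : 0 < u) :
    ∑' k : ℤ, |χ (exp (-(k : ℝ)) * u)| ≤ absMoment χ 0 := by
  simpa using tsum_le_absMoment hχ hu

end Moment

theorem stmt9_general (χ f : ℝ → ℝ) (ν : ℝ) (hν0 : 0 < ν) (hν1 : ν < 1)
    (hχ1 : ∀ u : ℝ, 0 < u → HasSum (fun k : ℤ => χ (Real.exp (-(k : ℝ)) * u)) 1)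
    (hs0 : ∀ u : ℝ, 0 < u → Summable fun k : ℤ => |χ (Real.exp (-(k : ℝ)) * u)|)
    (hsν : ∀ u : ℝ, 0 < u →
      Summable fun k : ℤ => |χ (Real.exp (-(k : ℝ)) * u)| * |(k : ℝ) - Real.log u| ^ ν)
    (hbν : BddAbove (Set.range fun u : {u : ℝ // 0 < u} =>
      ∑' k : ℤ, |χ (Real.exp (-(k : ℝ)) * u.1)| * |(k : ℝ) - Real.log u.1| ^ ν))
    (hb0 : BddAbove (Set.range fun u : {u : ℝ // 0 < u} =>
      ∑' k : ℤ, |χ (Real.exp (-(k : ℝ)) * u.1)| * |(k : ℝ) - Real.log u.1| ^ (0 : ℝ)))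
    (hfb : BddAbove (Set.range fun x : {x : ℝ // 0 < x} => |f x.1|)) :
    ∃ W : ℝ, 0 < W ∧ ∀ w : ℝ, W ≤ w → ∀ t : ℝ, 0 < t →
      |expSamp χ f w t - f t| ≤
        logMod f (w ^ (-ν)) * (absMoment χ ν + 2 * absMoment χ 0) +
          2 ^ (ν + 1) * supNormPos f * absMoment χ ν * w ^ (-ν) := by
  refine ⟨1, one_pos, fun w hw t ht => ?_⟩
  have hw0 : 0 < w := one_pos.trans_le hw
  have hu : 0 < t ^ w := rpow_pos_of_pos ht w
  have hN : 0 ≤ supNormPos f := (abs_nonneg _).trans (le_ciSup hfb ⟨1, one_pos⟩)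
  have hδ : 0 < w ^ (-ν) := rpow_pos_of_pos hw0 _
  have hω : 0 ≤ logMod f (w ^ (-ν)) := logMod_nonneg hfb hδ.le
  have hM0 : 0 ≤ absMoment χ 0 :=
    (tsum_nonneg fun _ => abs_nonneg _).trans (tsum_abs_le_absMoment_zero hb0 hu)
  have hMν : 0 ≤ absMoment χ ν :=
    (tsum_nonneg fun _ => by positivity).trans (tsum_le_absMoment hbν hu)
  have htwo : (2 : ℝ) ≤ 2 ^ (ν + 1) := by
    rw [rpow_add two_pos, rpow_one]
    linarith [one_le_rpow one_le_two hν0.le]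
  have hbound := abs_tsum_mul_sub_le_of_moments (hχ1 _ hu) (hs0 _ hu) (hsν _ hu)
    (fun k => abs_sub_le_logMod_mul_add hfb hw0 hν0.le hν1.le ht k) hω (by positivity)
    (tsum_abs_le_absMoment_zero hb0 hu) (tsum_le_absMoment hbν hu)
  refine hbound.trans ?_
  have := mul_le_mul_of_nonneg_right htwo
    (by positivity : 0 ≤ supNormPos f * absMoment χ ν * w ^ (-ν))
  nlinarith [mul_nonneg hω hM0]

/-- Degree of approximation in terms of the logarithmic modulus of continuity. -/
theorem stmt9 (χ f : ℝ → ℝ) (ν : ℝ) (hν0 : 0 < ν) (hν1 : ν < 1)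
    (hχ1 : ∀ u : ℝ, 0 < u → HasSum (fun k : ℤ => χ (Real.exp (-(k : ℝ)) * u)) 1)
    (hs0 : ∀ u : ℝ, 0 < u → Summable fun k : ℤ => |χ (Real.exp (-(k : ℝ)) * u)|)
    (hsν : ∀ u : ℝ, 0 < u →
      Summable fun k : ℤ => |χ (Real.exp (-(k : ℝ)) * u)| * |(k : ℝ) - Real.log u| ^ ν)
    (hbν : BddAbove (Set.range fun u : {u : ℝ // 0 < u} =>
      ∑' k : ℤ, |χ (Real.exp (-(k : ℝ)) * u.1)| * |(k : ℝ) - Real.log u.1| ^ ν))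
    (hb0 : BddAbove (Set.range fun u : {u : ℝ // 0 < u} =>
      ∑' k : ℤ, |χ (Real.exp (-(k : ℝ)) * u.1)| * |(k : ℝ) - Real.log u.1| ^ (0 : ℝ)))
    (hfb : BddAbove (Set.range fun x : {x : ℝ // 0 < x} => |f x.1|))
    (hfc : LogUniformCont f) :
    ∃ W : ℝ, 0 < W ∧ ∀ w : ℝ, W ≤ w → ∀ t : ℝ, 0 < t →
      |expSamp χ f w t - f t| ≤
        logMod f (w ^ (-ν)) * (absMoment χ ν + 2 * absMoment χ 0) +
          2 ^ (ν + 1) * supNormPos f * absMoment χ ν * w ^ (-ν) :=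
  stmt9_general χ f ν hν0 hν1 hχ1 hs0 hsν hbν hb0 hfb
end

section
/- Let χ_a, χ_b be two continuous kernels supported in [e^{-a}, e^a] and [e^{-b}, e^b] respectively, and α ∈ ℝ. Define χ(u) := (1-α)·χ_a(2u e^{-a-1}) + α·χ_b(2u e^b). Then χ(1) = 0, χ satisfies ∑_{k∈ℤ} χ(e^{-k}u) = 1 for all u > 0, and has finite absolute moments M_ν(χ) of every order ν; moreover ∫₀¹ χ(u) u^{2kπi - 1} du equals 0 for every integer k ≠ 0 and equals α for k = 0. -/
/-!
In the variable `x = -log u` the partition of unity says that the integer translates of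
`x ↦ g(e^{-x})` sum to `1`. The Fourier coefficients of this periodization are the values of the
Fourier transform at the integers (the key step of Poisson summation), so the Mellin transform of a
continuous kernel with compact support in `(0, ∞)` is `δ_{k0}` at `2πik`.

The two rescaled kernels making up `χ` live on either side of `1`: `χ_b(2ue^b)` vanishes for
`u > 1/2` and `χ_a(2ue^{-a-1})` for `u < e/2`. Hence `χ(1) = 0`, and on `(0, 1)` only the `χ_b`
part survives, contributing `α δ_{k0}`. Rescaling preserves the partition of unity, and for a
bounded function supported in `[e^{-R}, e^R]` each moment sum has at most `2R + 1` nonzero terms.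
-/

open Real Filter Set MeasureTheory

open scoped FourierTransform

theorem ContinuousMap.summable_norm_restrict_comp_addRight_intCast {f : C(ℝ, ℂ)}
    (hf : HasCompactSupport f) (K : TopologicalSpace.Compacts ℝ) :
    Summable fun n : ℤ => ‖(f.comp (ContinuousMap.addRight n)).restrict K‖ := by
  have hdecay : (f : ℝ → ℂ) =O[cocompact ℝ] fun x : ℝ => |x| ^ (-2 : ℝ) := by
    have h0 := hasCompactSupport_iff_eventuallyEq.mp hf
    rw [coclosedCompact_eq_cocompact] at h0
    exact h0.trans_isBigO (Asymptotics.isBigO_zero _ _)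
  exact summable_of_isBigO (Real.summable_abs_int_rpow one_lt_two)
    ((isBigO_norm_restrict_cocompact f two_pos hdecay K).comp_tendsto Int.tendsto_coe_cofinite)

theorem Real.fourier_intCast_eq_ite_of_hasSum_comp_add_intCast {f : C(ℝ, ℂ)}
    (hf : HasCompactSupport f) (hsum : ∀ x : ℝ, HasSum (fun n : ℤ => f (x + n)) 1) (m : ℤ) :
    𝓕 (f : ℝ → ℂ) m = if m = 0 then 1 else 0 := by
  have hK := f.summable_norm_restrict_comp_addRight_intCast hf
  have hlift : Function.Periodic.lift (f.periodic_tsum_comp_add_zsmul 1) = fourier (T := 1) 0 := by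
    funext x
    induction x using QuotientAddGroup.induction_on with
    | H x =>
      rw [Function.Periodic.lift_coe, fourier_zero,
        ← ContinuousMap.tsum_apply (ContinuousMap.summable_of_locally_summable_norm ?_)]
      · simpa using (hsum x).tsum_eq
      · simpa using hK
  rw [← Real.fourierCoeff_tsum_comp_add hK, hlift, fourierCoeff_fourier, Pi.single_apply]

theorem mellin_two_pi_mul_intCast_mul_I {g : ℝ → ℂ} (k : ℤ) :
    mellin g (2 * π * k * Complex.I) = 𝓕 (fun u : ℝ => g (exp (-u))) k := by
  rw [mellin_eq_fourier]
  simp [pi_ne_zero]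

theorem mem_Icc_exp_neg_exp_iff {v r : ℝ} :
    v ∈ Icc (exp (-r)) (exp r) ↔ 0 < v ∧ |log v| ≤ r := by
  constructor
  · rintro ⟨hlo, hhi⟩
    have hv : 0 < v := (exp_pos _).trans_le hlo
    exact ⟨hv, abs_le.mpr ⟨(le_log_iff_exp_le hv).mpr hlo, (log_le_iff_le_exp hv).mpr hhi⟩⟩
  · rintro ⟨hv, hlog⟩
    exact ⟨(le_log_iff_exp_le hv).mp (abs_le.mp hlog).1,
      (log_le_iff_le_exp hv).mp (abs_le.mp hlog).2⟩

section LogSupport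

variable {E : Type*} [Zero E] {g : ℝ → E} {r : ℝ}

theorem abs_sub_log_le_of_apply_ne_zero (hg : Function.support g ⊆ Icc (exp (-r)) (exp r))
    {u : ℝ} (hu : 0 < u) {k : ℤ} (hk : g (exp (-k) * u) ≠ 0) : |(k : ℝ) - log u| ≤ r := by
  have h := (mem_Icc_exp_neg_exp_iff.mp (hg hk)).2
  rwa [log_mul (exp_ne_zero _) hu.ne', log_exp, ← abs_neg, neg_add', neg_neg] at h

theorem support_comp_const_mul_subset (hg : Function.support g ⊆ Icc (exp (-r)) (exp r))
    {c : ℝ} (hc : 0 < c) :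
    Function.support (fun v => g (c * v)) ⊆ Icc (exp (-(r + |log c|))) (exp (r + |log c|)) := by
  intro v hv
  obtain ⟨hcv, hlog⟩ := mem_Icc_exp_neg_exp_iff.mp (hg hv)
  have hv0 : 0 < v := pos_of_mul_pos_right hcv hc.le
  refine mem_Icc_exp_neg_exp_iff.mpr ⟨hv0, ?_⟩
  rw [log_mul hc.ne' hv0.ne'] at hlog
  calc |log v| = |(log c + log v) - log c| := by ring_nf
    _ ≤ |log c + log v| + |log c| := abs_sub _ _
    _ ≤ r + |log c| := by linarith

theorem apply_two_mul_exp_neg_sub_one_mul_eq_zero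
    (hg : Function.support g ⊆ Icc (exp (-r)) (exp r)) {v : ℝ} (hv : v ≤ 1) :
    g (2 * exp (-r - 1) * v) = 0 := by
  refine Function.notMem_support.mp fun h => (not_le.mpr ?_) (hg h).1
  have h2e : 2 * exp (-r - 1) < exp (-r) := by
    rw [show exp (-r) = exp 1 * exp (-r - 1) by rw [← exp_add]; ring_nf]
    exact mul_lt_mul_of_pos_right exp_one_gt_two (exp_pos _)
  calc 2 * exp (-r - 1) * v ≤ 2 * exp (-r - 1) := mul_le_of_le_one_right (by positivity) hv
    _ < exp (-r) := h2e

theorem apply_two_mul_exp_mul_eq_zero (hg : Function.support g ⊆ Icc (exp (-r)) (exp r))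
    {v : ℝ} (hv : 1 ≤ v) : g (2 * exp r * v) = 0 := by
  refine Function.notMem_support.mp fun h => (not_le.mpr ?_) (hg h).2
  calc exp r < 2 * exp r := by linarith [exp_pos r]
    _ ≤ 2 * exp r * v := le_mul_of_one_le_right (by positivity) hv

end LogSupport

theorem support_add_subset_Icc_exp_max {E : Type*} [AddZeroClass E] {g f : ℝ → E} {r s : ℝ}
    (hg : Function.support g ⊆ Icc (exp (-r)) (exp r))
    (hf : Function.support f ⊆ Icc (exp (-s)) (exp s)) :
    Function.support (fun v => g v + f v) ⊆ Icc (exp (-max r s)) (exp (max r s)) := by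
  have hmono : ∀ {t}, t ≤ max r s →
      Icc (exp (-t)) (exp t) ⊆ Icc (exp (-max r s)) (exp (max r s)) := fun h =>
    Icc_subset_Icc (exp_le_exp.mpr (neg_le_neg h)) (exp_le_exp.mpr h)
  exact (Function.support_add g f).trans
    (union_subset (hg.trans (hmono (le_max_left _ _))) (hf.trans (hmono (le_max_right _ _))))

theorem ContinuousOn.comp_const_mul_Ioi {E : Type*} [TopologicalSpace E] {g : ℝ → E}
    (hg : ContinuousOn g (Ioi 0)) {c : ℝ} (hc : 0 < c) :
    ContinuousOn (fun v => g (c * v)) (Ioi 0) :=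
  hg.comp (continuousOn_const.mul continuousOn_id) fun _ hv => mul_pos hc hv

theorem hasSum_comp_const_mul {E : Type*} [AddCommMonoid E] [TopologicalSpace E] {g : ℝ → E}
    {s : E} (hg : ∀ u, 0 < u → HasSum (fun k : ℤ => g (exp (-k) * u)) s) {c : ℝ} (hc : 0 < c)
    {u : ℝ} (hu : 0 < u) : HasSum (fun k : ℤ => g (c * (exp (-k) * u))) s := by
  simpa only [mul_left_comm c] using hg (c * u) (mul_pos hc hu)

theorem exists_abs_le_of_continuousOn_of_support_subset {g : ℝ → ℝ} {r : ℝ}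
    (hcont : ContinuousOn g (Ioi 0)) (hg : Function.support g ⊆ Icc (exp (-r)) (exp r)) :
    ∃ M, ∀ v, |g v| ≤ M := by
  obtain ⟨C, hC⟩ := isCompact_Icc.exists_bound_of_continuousOn
    (hcont.mono fun v hv => (exp_pos (-r)).trans_le hv.1)
  refine ⟨max C 0, fun v => ?_⟩
  by_cases hv : v ∈ Icc (exp (-r)) (exp r)
  · exact (hC v hv).trans (le_max_left _ _)
  · rw [Function.notMem_support.mp fun h => hv (hg h), abs_zero]
    exact le_max_right _ _

theorem card_Icc_ceil_sub_floor_add_le (x : ℝ) {r : ℝ} (hr : 0 ≤ r) :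
    ((Finset.Icc ⌈x - r⌉ ⌊x + r⌋).card : ℝ) ≤ 2 * r + 1 := by
  have hfloor : (⌊x + r⌋ : ℝ) ≤ x + r := Int.floor_le _
  have hceil : x - r ≤ (⌈x - r⌉ : ℝ) := Int.le_ceil _
  rw [Int.card_Icc, ← Int.cast_natCast, Int.toNat_eq_max, Int.cast_max]
  push_cast
  exact max_le (by linarith) (by linarith)

theorem exists_moment_bound_of_bounded_of_support_subset {g : ℝ → ℝ} {M r ν : ℝ} (hr : 0 ≤ r)
    (hν : 0 ≤ ν) (hM : ∀ v, |g v| ≤ M) (hg : Function.support g ⊆ Icc (exp (-r)) (exp r)) :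
    ∃ C, ∀ u, 0 < u →
      (Summable fun k : ℤ => |g (exp (-k) * u)| * |(k : ℝ) - log u| ^ ν) ∧
      ∑' k : ℤ, |g (exp (-k) * u)| * |(k : ℝ) - log u| ^ ν ≤ C := by
  have hM0 : 0 ≤ M := (abs_nonneg _).trans (hM 0)
  refine ⟨(2 * r + 1) * (M * r ^ ν), fun u hu => ?_⟩
  set F := Finset.Icc ⌈log u - r⌉ ⌊log u + r⌋
  have hout : ∀ k ∉ F, |g (exp (-k) * u)| * |(k : ℝ) - log u| ^ ν = 0 := by
    intro k hk
    by_contra hne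
    have hk' := abs_le.mp (abs_sub_log_le_of_apply_ne_zero hg hu (k := k)
      fun h => hne (by rw [h, abs_zero, zero_mul]))
    exact hk (Finset.mem_Icc.mpr ⟨Int.ceil_le.mpr (by linarith), Int.le_floor.mpr (by linarith)⟩)
  have hterm : ∀ k ∈ F, |g (exp (-k) * u)| * |(k : ℝ) - log u| ^ ν ≤ M * r ^ ν := by
    intro k hk
    obtain ⟨hlo, hhi⟩ := Finset.mem_Icc.mp hk
    have hdist : |(k : ℝ) - log u| ≤ r :=
      abs_le.mpr ⟨by linarith [Int.ceil_le.mp hlo], by linarith [Int.le_floor.mp hhi]⟩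
    exact mul_le_mul (hM _) (rpow_le_rpow (abs_nonneg _) hdist hν) (by positivity) hM0
  refine ⟨summable_of_ne_finset_zero hout, ?_⟩
  calc ∑' k : ℤ, |g (exp (-k) * u)| * |(k : ℝ) - log u| ^ ν
      = ∑ k ∈ F, |g (exp (-k) * u)| * |(k : ℝ) - log u| ^ ν := tsum_eq_sum hout
    _ ≤ F.card * (M * r ^ ν) := by simpa using Finset.sum_le_card_nsmul F _ _ hterm
    _ ≤ (2 * r + 1) * (M * r ^ ν) :=
      mul_le_mul_of_nonneg_right (card_Icc_ceil_sub_floor_add_le _ hr) (by positivity)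

theorem exists_moment_bound_of_continuousOn {g : ℝ → ℝ} {r ν : ℝ} (hr : 0 ≤ r) (hν : 0 ≤ ν)
    (hcont : ContinuousOn g (Ioi 0)) (hg : Function.support g ⊆ Icc (exp (-r)) (exp r)) :
    ∃ C, ∀ u, 0 < u →
      (Summable fun k : ℤ => |g (exp (-k) * u)| * |(k : ℝ) - log u| ^ ν) ∧
      ∑' k : ℤ, |g (exp (-k) * u)| * |(k : ℝ) - log u| ^ ν ≤ C :=
  have ⟨_, hM⟩ := exists_abs_le_of_continuousOn_of_support_subset hcont hg
  exists_moment_bound_of_bounded_of_support_subset hr hν hM hg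

theorem mellin_two_pi_mul_intCast_mul_I_eq_ite {g : ℝ → ℝ} {r : ℝ}
    (hcont : ContinuousOn g (Ioi 0)) (hg : Function.support g ⊆ Icc (exp (-r)) (exp r))
    (hpart : ∀ u, 0 < u → HasSum (fun k : ℤ => g (exp (-k) * u)) 1) (k : ℤ) :
    mellin (fun v => (g v : ℂ)) (2 * π * k * Complex.I) = if k = 0 then 1 else 0 := by
  let f : C(ℝ, ℂ) := ⟨fun u => g (exp (-u)),
    Complex.continuous_ofReal.comp (hcont.comp_continuous (by fun_prop) fun u => exp_pos _)⟩
  have hf : HasCompactSupport f := by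
    refine HasCompactSupport.intro (isCompact_Icc (a := -r) (b := r)) fun u hu => ?_
    refine Complex.ofReal_eq_zero.mpr (Function.notMem_support.mp fun h => hu ?_)
    have h := (mem_Icc_exp_neg_exp_iff.mp (hg h)).2
    rw [log_exp, abs_neg] at h
    exact abs_le.mp h
  have hsum : ∀ x : ℝ, HasSum (fun n : ℤ => f (x + n)) 1 := by
    intro x
    have h := Complex.hasSum_ofReal.mpr (hpart (exp (-x)) (exp_pos _))
    simpa only [f, ContinuousMap.coe_mk, ← exp_add, neg_add, add_comm, Complex.ofReal_one]
      using h
  exact (mellin_two_pi_mul_intCast_mul_I k).trans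
    (Real.fourier_intCast_eq_ite_of_hasSum_comp_add_intCast hf hsum k)

theorem setIntegral_Ioo_zero_one_cpow_mul_eq_mul_mellin {f g : ℝ → ℂ} {c : ℂ} (s : ℂ)
    (hfg : ∀ v ∈ Ioo (0 : ℝ) 1, f v = c * g v) (hg : ∀ v, 1 ≤ v → g v = 0) :
    ∫ v in Ioo (0 : ℝ) 1, (v : ℂ) ^ (s - 1) * f v = c * mellin g s := by
  rw [mellin, setIntegral_eq_of_subset_of_forall_sdiff_eq_zero measurableSet_Ioi
    Ioo_subset_Ioi_self, ← integral_const_mul]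
  · refine setIntegral_congr_fun measurableSet_Ioo fun v hv => ?_
    simp only [hfg v hv, smul_eq_mul]
    ring
  · rintro v ⟨hv0, hv⟩
    rw [hg v (not_lt.mp fun h => hv ⟨hv0, h⟩), smul_zero]

theorem stmt14_general (χa χb : ℝ → ℝ) (a b : ℝ) (ha : 0 < a)
    (hconta : ContinuousOn χa (Set.Ioi 0)) (hcontb : ContinuousOn χb (Set.Ioi 0))
    (hsupa : ∀ u : ℝ, u ∉ Set.Icc (Real.exp (-a)) (Real.exp a) → χa u = 0)
    (hsupb : ∀ u : ℝ, u ∉ Set.Icc (Real.exp (-b)) (Real.exp b) → χb u = 0)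
    (hka : IsKernel χa) (hkb : IsKernel χb) (α : ℝ) :
    let χ : ℝ → ℝ :=
      fun u => (1 - α) * χa (2 * u * Real.exp (-a - 1)) + α * χb (2 * u * Real.exp b)
    χ 1 = 0 ∧
    (∀ u : ℝ, 0 < u → HasSum (fun k : ℤ => χ (Real.exp (-(k : ℝ)) * u)) 1) ∧
    (∀ ν : ℝ, 0 < ν → ∃ C : ℝ, ∀ u : ℝ, 0 < u →
      (Summable fun k : ℤ => |χ (Real.exp (-(k : ℝ)) * u)| * |(k : ℝ) - Real.log u| ^ ν) ∧
      ∑' k : ℤ, |χ (Real.exp (-(k : ℝ)) * u)| * |(k : ℝ) - Real.log u| ^ ν ≤ C) ∧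
    (∀ k : ℤ,
      (∫ v in Set.Ioo (0 : ℝ) 1,
          (v : ℂ) ^ (2 * (Real.pi : ℂ) * (k : ℂ) * Complex.I - 1) * (χ v : ℂ))
        = if k = 0 then (α : ℂ) else 0) := by
  intro χ
  have hχ : χ = fun v => (1 - α) * χa (2 * exp (-a - 1) * v) + α * χb (2 * exp b * v) := by
    simp only [χ, mul_right_comm]
  have hca : 0 < 2 * exp (-a - 1) := by positivity
  have hcb : 0 < 2 * exp b := by positivity
  have hsa := Function.support_subset_iff'.mpr hsupa
  have hsb := Function.support_subset_iff'.mpr hsupb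
  have hpartb (u : ℝ) (hu : 0 < u) := hasSum_comp_const_mul hkb.2.1 hcb hu
  refine ⟨?_, fun u hu => ?_, fun ν hν => ?_, fun k => ?_⟩
  · simp only [hχ]
    rw [apply_two_mul_exp_neg_sub_one_mul_eq_zero hsa le_rfl,
      apply_two_mul_exp_mul_eq_zero hsb le_rfl]
    ring
  · simpa only [hχ, mul_one, sub_add_cancel] using
      ((hasSum_comp_const_mul hka.2.1 hca hu).mul_left (1 - α)).add ((hpartb u hu).mul_left α)
  · have hcont : ContinuousOn χ (Ioi 0) := by
      rw [hχ]
      exact (continuousOn_const.mul (hconta.comp_const_mul_Ioi hca)).add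
        (continuousOn_const.mul (hcontb.comp_const_mul_Ioi hcb))
    have hsupp := support_add_subset_Icc_exp_max
      ((Function.support_mul_subset_right (fun _ => 1 - α) _).trans
        (support_comp_const_mul_subset hsa hca))
      ((Function.support_mul_subset_right (fun _ => α) _).trans
        (support_comp_const_mul_subset hsb hcb))
    rw [← hχ] at hsupp
    exact exists_moment_bound_of_continuousOn (by positivity) hν.le hcont hsupp
  · rw [setIntegral_Ioo_zero_one_cpow_mul_eq_mul_mellin (c := α)
      (g := fun v => (χb (2 * exp b * v) : ℂ)) _
      (fun v hv => by simp [hχ, apply_two_mul_exp_neg_sub_one_mul_eq_zero hsa hv.2.le])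
      (fun v hv => by simp [apply_two_mul_exp_mul_eq_zero hsb hv]),
      mellin_two_pi_mul_intCast_mul_I_eq_ite (hcontb.comp_const_mul_Ioi hcb)
        (support_comp_const_mul_subset hsb hcb) hpartb k]
    split_ifs <;> simp

/-- Construction of a kernel with χ(1) = 0 from two compactly supported kernels. -/
theorem stmt14 (χa χb : ℝ → ℝ) (a b : ℝ) (ha : 0 < a) (hb : 0 < b)
    (hconta : ContinuousOn χa (Set.Ioi 0)) (hcontb : ContinuousOn χb (Set.Ioi 0))
    (hsupa : ∀ u : ℝ, u ∉ Set.Icc (Real.exp (-a)) (Real.exp a) → χa u = 0)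
    (hsupb : ∀ u : ℝ, u ∉ Set.Icc (Real.exp (-b)) (Real.exp b) → χb u = 0)
    (hka : IsKernel χa) (hkb : IsKernel χb) (α : ℝ) :
    let χ : ℝ → ℝ :=
      fun u => (1 - α) * χa (2 * u * Real.exp (-a - 1)) + α * χb (2 * u * Real.exp b)
    χ 1 = 0 ∧
    (∀ u : ℝ, 0 < u → HasSum (fun k : ℤ => χ (Real.exp (-(k : ℝ)) * u)) 1) ∧
    (∀ ν : ℝ, 0 < ν → ∃ C : ℝ, ∀ u : ℝ, 0 < u →
      (Summable fun k : ℤ => |χ (Real.exp (-(k : ℝ)) * u)| * |(k : ℝ) - Real.log u| ^ ν) ∧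
      ∑' k : ℤ, |χ (Real.exp (-(k : ℝ)) * u)| * |(k : ℝ) - Real.log u| ^ ν ≤ C) ∧
    (∀ k : ℤ,
      (∫ v in Set.Ioo (0 : ℝ) 1,
          (v : ℂ) ^ (2 * (Real.pi : ℂ) * (k : ℂ) * Complex.I - 1) * (χ v : ℂ))
        = if k = 0 then (α : ℂ) else 0) :=
  stmt14_general χa χb a b ha hconta hcontb hsupa hsupb hka hkb α
end

section
/- For the kernel χ(t) = (1/4)·B̄₂(2te^{-2}) + (3/4)·B̄₂(2te): χ(1) = 0, ∑_{k∈ℤ} χ(e^{-k}u) = 1 for all u > 0, and ψ_χ⁻(u) = 3/4 for all u ∈ [1, e), where ψ_χ⁻(u) := ∑_{k > log u} χ(u e^{-k}). -/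
open Real Filter Set MeasureTheory

/-!
In the variable `s = log t`, `mellinB2` is the hat function `max (1 - |s|) 0`, whose integer
translates sum to 1 (only those at `⌊x⌋` and `⌊x⌋ + 1` are nonzero). So χ is a convex combination
of two partitions of unity. For `u ∈ [1, e)` the indices `k > log u` are exactly `k ≥ 1`; these
kill the first spline (supported in `(0, 1/2]`) and keep every nonzero translate of the second,
which carries weight `3/4`.
-/

noncomputable def hat (s : ℝ) : ℝ := max (1 - |s|) 0

lemma hat_eq_zero {s : ℝ} (h : 1 ≤ |s|) : hat s = 0 :=
  max_eq_right (by linarith)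

lemma hat_of_abs_le_one {s : ℝ} (h : |s| ≤ 1) : hat s = 1 - |s| :=
  max_eq_left (by linarith)

lemma mellinB2_exp (s : ℝ) : mellinB2 (exp s) = hat s := by
  unfold mellinB2
  simp only [log_exp, one_le_exp_iff, exp_le_exp, exp_lt_one_iff]
  split_ifs with h₁ h₂
  · rw [hat_of_abs_le_one (abs_le.2 ⟨by linarith, h₁.2⟩), abs_of_nonneg h₁.1]
  · rw [hat_of_abs_le_one (abs_le.2 ⟨h₂.1, by linarith⟩), abs_of_neg h₂.2]
    ring
  · refine (hat_eq_zero ?_).symm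
    rw [le_abs']
    by_contra! h
    rcases le_or_gt 0 s with hs | hs
    exacts [h₁ ⟨hs, h.2.le⟩, h₂ ⟨h.1.le, hs⟩]

lemma mellinB2_eq_hat_log {t : ℝ} (ht : 0 < t) : mellinB2 t = hat (log t) := by
  rw [← mellinB2_exp, exp_log ht]

lemma hasSum_hat_sub_int (x : ℝ) : HasSum (fun k : ℤ => hat (x - k)) 1 := by
  have hfl : (⌊x⌋ : ℝ) ≤ x := Int.floor_le x
  have hfu : x < ⌊x⌋ + 1 := Int.lt_floor_add_one x
  have hzero : ∀ k ∉ ({⌊x⌋, ⌊x⌋ + 1} : Finset ℤ), hat (x - k) = 0 := by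
    intro k hk
    simp only [Finset.mem_insert, Finset.mem_singleton, not_or] at hk
    apply hat_eq_zero
    rcases (show k ≤ ⌊x⌋ - 1 ∨ ⌊x⌋ + 2 ≤ k by omega) with h | h
    · have : (k : ℝ) ≤ ⌊x⌋ - 1 := by exact_mod_cast h
      rw [le_abs]; left; linarith
    · have : (⌊x⌋ : ℝ) + 2 ≤ k := by exact_mod_cast h
      rw [le_abs]; right; linarith
  convert hasSum_sum_of_ne_finset_zero (L := SummationFilter.unconditional ℤ) hzero using 1
  rw [Finset.sum_pair (by omega), Int.cast_add, Int.cast_one,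
    hat_of_abs_le_one (abs_le.2 ⟨by linarith, by linarith⟩),
    hat_of_abs_le_one (abs_le.2 ⟨by linarith, by linarith⟩),
    abs_of_nonneg (by linarith), abs_of_nonpos (by linarith)]
  ring

lemma hasSum_mellinB2 {u : ℝ} (hu : 0 < u) :
    HasSum (fun k : ℤ => mellinB2 (exp (-k) * u)) 1 := by
  convert hasSum_hat_sub_int (log u) using 2 with k
  rw [mellinB2_eq_hat_log (by positivity), log_mul (exp_ne_zero _) hu.ne', log_exp,
    neg_add_eq_sub]

noncomputable def mixedB2Kernel (t : ℝ) : ℝ :=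
  (1 / 4) * mellinB2 (2 * t * exp (-2)) + (3 / 4) * mellinB2 (2 * t * exp 1)

lemma mixedB2Kernel_eq_hat {t : ℝ} (ht : 0 < t) :
    mixedB2Kernel t =
      (1 / 4) * hat (log t + log 2 - 2) + (3 / 4) * hat (log t + log 2 + 1) := by
  rw [mixedB2Kernel, mellinB2_eq_hat_log (by positivity), mellinB2_eq_hat_log (by positivity),
    log_mul (by positivity) (exp_ne_zero _), log_mul (by positivity) (exp_ne_zero _),
    log_mul two_ne_zero ht.ne', log_exp, log_exp]
  ring_nf

lemma log_two_lt_one : log 2 < 1 := by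
  linarith [log_lt_sub_one_of_pos two_pos (by norm_num : (2 : ℝ) ≠ 1)]

lemma mixedB2Kernel_one : mixedB2Kernel 1 = 0 := by
  rw [mixedB2Kernel_eq_hat one_pos, log_one,
    hat_eq_zero (by rw [le_abs]; right; linarith [log_two_lt_one]),
    hat_eq_zero (by rw [le_abs]; left; linarith [log_pos one_lt_two])]
  ring

lemma hasSum_mixedB2Kernel {u : ℝ} (hu : 0 < u) :
    HasSum (fun k : ℤ => mixedB2Kernel (exp (-k) * u)) 1 := by
  have h := ((hasSum_mellinB2 (u := 2 * u * exp (-2)) (by positivity)).mul_left (1 / 4)).add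
    ((hasSum_mellinB2 (u := 2 * u * exp 1) (by positivity)).mul_left (3 / 4))
  rw [show (1 : ℝ) = 1 / 4 * 1 + 3 / 4 * 1 by norm_num]
  convert h using 2 with k
  · rfl
  · rw [mixedB2Kernel]
    ring_nf

lemma psiMinus_mixedB2Kernel {u : ℝ} (hu : u ∈ Ico 1 (exp 1)) :
    psiMinus mixedB2Kernel u = 3 / 4 := by
  have hu₀ : 0 < u := one_pos.trans_le hu.1
  have hlog₀ : 0 ≤ log u := log_nonneg hu.1
  have hlog₁ : log u < 1 := (log_lt_iff_lt_exp hu₀).2 hu.2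
  have hterm : ∀ k : ℤ,
      (if log u < k then mixedB2Kernel (u * exp (-k)) else 0) =
        3 / 4 * hat (log u + log 2 + 1 - k) := by
    intro k
    split_ifs with hk
    · have hk₀ : (0 : ℤ) < k := by exact_mod_cast hlog₀.trans_lt hk
      have hk₁ : (1 : ℝ) ≤ k := by exact_mod_cast hk₀
      rw [mixedB2Kernel_eq_hat (by positivity), log_mul hu₀.ne' (exp_ne_zero _), log_exp,
        hat_eq_zero (by rw [le_abs]; right; linarith [log_two_lt_one])]
      ring_nf
    · have hk₁ : k < (1 : ℤ) := by exact_mod_cast (show (k : ℝ) < 1 by linarith)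
      have hk₀ : (k : ℝ) ≤ 0 := by exact_mod_cast (show k ≤ 0 by omega)
      rw [hat_eq_zero (by rw [le_abs]; left; linarith [log_pos one_lt_two])]
      ring
  rw [psiMinus, tsum_congr hterm, tsum_mul_left, (hasSum_hat_sub_int _).tsum_eq, mul_one]

/-- The combined Mellin B-spline kernel: χ(1) = 0, partition of unity, and ψ⁻ ≡ 3/4
on [1, e). -/
theorem stmt17 :
    let χ : ℝ → ℝ :=
      fun t => (1 / 4) * mellinB2 (2 * t * Real.exp (-2)) + (3 / 4) * mellinB2 (2 * t * Real.exp 1)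
    χ 1 = 0 ∧
    (∀ u : ℝ, 0 < u → HasSum (fun k : ℤ => χ (Real.exp (-(k : ℝ)) * u)) 1) ∧
    (∀ u ∈ Set.Ico (1 : ℝ) (Real.exp 1), psiMinus χ u = 3 / 4) :=
  ⟨mixedB2Kernel_one, fun _ => hasSum_mixedB2Kernel, fun _ => psiMinus_mixedB2Kernel⟩
end
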